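/- arXiv:1212.0751 — 6 statements merged into one kernel-verified Lean document; each statement's English description precedes it below -/
import Mathlib

section
/- Let I1 and I2 be interval-posets of sizes k1 and k2 with trees(I1) = p and trees(I2) = m. Then the composition 𝔹(I1,I2) contains exactly m+1 interval-posets, each of size k1+k2+1, and the statistic trees restricts to a bijection from 𝔹(I1,I2) onto the set {p+1, p+2, …, p+m+1}. -/
open Polynomial

/-- A binary tree: either the empty tree or a pair of binary trees
(left and right subtrees) grafted on an internal node. -/
inductive BinTree : Type
  | leaf : BinTree
  | node : BinTree → BinTree → BinTree

namespace BinTree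

/-- The size of a binary tree: its number of internal nodes. -/
def size : BinTree → ℕ
  | leaf => 0
  | node l r => l.size + r.size + 1

/-- One right rotation somewhere in the tree: `Rot T T'` means that `T'` is obtained
from `T` by replacing one subtree of the form `y(x(A,B),C)` by `x(A,y(B,C))`. -/
inductive Rot : BinTree → BinTree → Prop
  | root (A B C : BinTree) : Rot (node (node A B) C) (node A (node B C))
  | left {L L' : BinTree} (R : BinTree) : Rot L L' → Rot (node L R) (node L' R)
  | right (L : BinTree) {R R' : BinTree} : Rot R R' → Rot (node L R) (node L R')

/-- The Tamari order: `TamariLE T T'` iff `T'` is obtained from `T` by a (possibly empty)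
sequence of right rotations. -/
def TamariLE (T T' : BinTree) : Prop := Relation.ReflTransGen Rot T T'

/-- The Tamari polynomial `B_T ∈ ℤ[x]`: `B_∅ = 1` and for `T = x(L,R)`, `B_T` is the
unique polynomial with `(x-1)·B_T = x·B_L·(x·B_R - B_R(1))` (exact division by the
monic polynomial `X - 1`, the right-hand side vanishing at `x = 1`). -/
noncomputable def tamPoly : BinTree → Polynomial ℤ
  | leaf => 1
  | node l r =>
      (X * tamPoly l * (X * tamPoly r - C ((tamPoly r).eval 1))) /ₘ (X - C 1)

/-- The mirror Tamari polynomial, obtained by exchanging the roles of the left and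
right subtrees in the recursive definition of the Tamari polynomial. -/
noncomputable def tamPolyMirror : BinTree → Polynomial ℤ
  | leaf => 1
  | node l r =>
      (X * tamPolyMirror r * (X * tamPolyMirror l - C ((tamPolyMirror l).eval 1))) /ₘ (X - C 1)

/-- The number of nodes on the left border of a binary tree. -/
def leftBorder : BinTree → ℕ
  | leaf => 0
  | node l _ => l.leftBorder + 1

/-- The number of nodes on the right border of a binary tree. -/
def rightBorder : BinTree → ℕ
  | leaf => 0
  | node _ r => r.rightBorder + 1

/-- `inSub T a b`: in the unique binary-search-tree labelling of `T` by `1,…,size T`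
(all labels of the left subtree of a node are smaller than its label, all labels of its
right subtree are larger), the node labelled `a` belongs to the subtree rooted at the
node labelled `b` (in particular `inSub T a a` holds for every node label `a`). -/
def inSub : BinTree → ℕ → ℕ → Prop
  | leaf => fun _ _ => False
  | node l r => fun a b =>
      (b = l.size + 1 ∧ 1 ≤ a ∧ a ≤ l.size + r.size + 1) ∨
      inSub l a b ∨
      (l.size + 1 < a ∧ l.size + 1 < b ∧ inSub r (a - (l.size + 1)) (b - (l.size + 1)))

/-- The binary search tree poset of `T`: `bstRel T a b` iff `a ≺_T b`, i.e. `a ≠ b` and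
the node labelled `a` is in the subtree rooted at the node labelled `b`. -/
def bstRel (T : BinTree) (a b : ℕ) : Prop := a ≠ b ∧ inSub T a b

/-- The increasing forest `inc(T)`: `a ≺ b` iff `a < b` and `a ≺_T b`. -/
def incRel (T : BinTree) (a b : ℕ) : Prop := a < b ∧ bstRel T a b

/-- The decreasing forest `dec(T)`: `b ≺ a` iff `b > a` and `b ≺_T a`. -/
def decRel (T : BinTree) (a b : ℕ) : Prop := b < a ∧ bstRel T a b

/-- The relations of the interval-poset `IP[T,T']`: exactly those of `dec(T)`
together with those of `inc(T')`. -/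
def IPrel (T T' : BinTree) (a b : ℕ) : Prop := decRel T a b ∨ incRel T' a b

end BinTree

open BinTree

/-- `σ` is a linear extension of the strict relation `rel` on `{1,…,n}`: reading the word
`σ(1)…σ(n)` (the `i`-th letter being the label `(σ i : ℕ) + 1`), whenever `rel a b` holds
the letter `a` appears before the letter `b`. -/
def IsLinExt (n : ℕ) (rel : ℕ → ℕ → Prop) (σ : Equiv.Perm (Fin n)) : Prop :=
  ∀ i j : Fin n, rel ((σ i : ℕ) + 1) ((σ j : ℕ) + 1) → i < j

/-- An interval-poset of size `n`: a (strict) poset on `{1,…,n}` such that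
`a ≺ c` implies `b ≺ c` for all `a < b < c`, and `c ≺ a` implies `b ≺ a` for all
`a < b < c`. -/
def IsIntervalPoset (n : ℕ) (rel : ℕ → ℕ → Prop) : Prop :=
  (∀ a b, rel a b → 1 ≤ a ∧ a ≤ n ∧ 1 ≤ b ∧ b ≤ n) ∧
  (∀ a, ¬ rel a a) ∧
  (∀ a b c, rel a b → rel b c → rel a c) ∧
  (∀ a b c, a < b → b < c → rel a c → rel b c) ∧
  (∀ a b c, a < b → b < c → rel c a → rel b a)

/-- `trees(P)` : the number of connected components of the forest formed by the decreasing
relations of `P`, i.e. the number of `k ∈ {1,…,n}` such that there is no `j < k`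
with `k ≺_P j`. -/
noncomputable def treeStat (n : ℕ) (rel : ℕ → ℕ → Prop) : ℕ :=
  Set.ncard {k : ℕ | 1 ≤ k ∧ k ≤ n ∧ ∀ j, j < k → ¬ rel k j}

/-- The composition `𝔹(I1,I2)` of two interval-posets of sizes `k1` and `k2`:
the set of interval-posets `I` of size `k1+k2+1` such that
(i) the relations of `I` among `1,…,k1` are exactly those of `I1`,
(ii) the relations of `I` among `k1+2,…,k1+k2+1` are exactly those of `I2` shifted
by `k1+1`, (iii) `i ≺_I k1+1` for all `i ≤ k1`, and (iv) there is no relation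
`k1+1 ≺_I j` for `j > k1+1`. -/
def Comp (k1 k2 : ℕ) (I1 I2 : ℕ → ℕ → Prop) : Set (ℕ → ℕ → Prop) :=
  {I | IsIntervalPoset (k1 + k2 + 1) I ∧
    (∀ a b, 1 ≤ a → a ≤ k1 → 1 ≤ b → b ≤ k1 → (I a b ↔ I1 a b)) ∧
    (∀ a b, k1 + 2 ≤ a → a ≤ k1 + k2 + 1 → k1 + 2 ≤ b → b ≤ k1 + k2 + 1 →
      (I a b ↔ I2 (a - (k1 + 1)) (b - (k1 + 1)))) ∧
    (∀ i, 1 ≤ i → i ≤ k1 → I i (k1 + 1)) ∧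
    (∀ j, k1 + 1 < j → ¬ I (k1 + 1) j)}

/-- The co-inversions of a permutation `σ` of `{1,…,n}` (written as the word
`σ(1)…σ(n)`): pairs `(σ(i), σ(j))` with `i < j` and `σ(i) > σ(j)`. -/
def coinv (n : ℕ) (σ : Equiv.Perm (Fin n)) : Set (Fin n × Fin n) :=
  {p | ∃ i j : Fin n, i < j ∧ σ j < σ i ∧ p = (σ i, σ j)}

namespace Stmt12Aux

/-- The candidate composed poset with cut parameter `t`. -/
def phi (k1 t : ℕ) (I1 I2 : ℕ → ℕ → Prop) : ℕ → ℕ → Prop := fun a b =>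
  I1 a b ∨
  (1 ≤ a ∧ a ≤ k1 ∧ b = k1 + 1) ∨
  (k1 + 1 < a ∧ a ≤ k1 + 1 + t ∧ b = k1 + 1) ∨
  (k1 + 1 < a ∧ k1 + 1 < b ∧ I2 (a - (k1 + 1)) (b - (k1 + 1)))

/-- Roots of the decreasing forest of a poset. -/
def Roots (k2 : ℕ) (I2 : ℕ → ℕ → Prop) : Set ℕ :=
  {k : ℕ | 1 ≤ k ∧ k ≤ k2 ∧ ∀ j, j < k → ¬ I2 k j}

/-- The valid cut parameters. -/
def Tset (k2 : ℕ) (I2 : ℕ → ℕ → Prop) : Set ℕ :=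
  {t | t ≤ k2 ∧ (t = k2 ∨ t + 1 ∈ Roots k2 I2)}

lemma treeStat_eq_roots (k2 : ℕ) (I2 : ℕ → ℕ → Prop) :
    treeStat k2 I2 = (Roots k2 I2).ncard := rfl

lemma roots_finite (k2 : ℕ) (I2 : ℕ → ℕ → Prop) : (Roots k2 I2).Finite :=
  (Set.finite_Icc 1 k2).subset fun k hk => ⟨hk.1, hk.2.1⟩

lemma tset_finite (k2 : ℕ) (I2 : ℕ → ℕ → Prop) : (Tset k2 I2).Finite :=
  (Set.finite_Icc 0 k2).subset fun t ht => ⟨Nat.zero_le _, ht.1⟩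

lemma closed (k2 t : ℕ) (I2 : ℕ → ℕ → Prop) (hI2 : IsIntervalPoset k2 I2)
    (ht : t ∈ Tset k2 I2) : ∀ A B, I2 A B → B ≤ t → A ≤ t := by
  obtain ⟨htk, hc⟩ := ht
  intro A B hAB hBt
  rcases hc with rfl | hroot
  · exact (hI2.1 A B hAB).2.1
  · by_contra hA
    push_neg at hA
    rcases eq_or_lt_of_le (Nat.succ_le_of_lt hA) with h1 | h1
    · subst h1
      exact hroot.2.2 B (by omega) hAB
    · exact hroot.2.2 B (by omega) (hI2.2.2.2.2 B (t+1) A (by omega) h1 hAB)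

lemma phi_isIP (k1 k2 t : ℕ) (I1 I2 : ℕ → ℕ → Prop)
    (hI1 : IsIntervalPoset k1 I1) (hI2 : IsIntervalPoset k2 I2)
    (ht : t ∈ Tset k2 I2) :
    IsIntervalPoset (k1 + k2 + 1) (phi k1 t I1 I2) := by
  obtain ⟨hb1, hi1, htr1, h41, h51⟩ := hI1
  have htk2 : t ≤ k2 := ht.1
  refine ⟨?_, ?_, ?_, ?_, ?_⟩
  · rintro a b (h | ⟨h1,h2,rfl⟩ | ⟨h1,h2,rfl⟩ | ⟨h1,h2,h3⟩)
    · have := hb1 a b h; omega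
    · omega
    · omega
    · have := hI2.1 _ _ h3; omega
  · rintro a (h | ⟨h1,h2,h3⟩ | ⟨h1,h2,h3⟩ | ⟨h1,h2,h3⟩)
    · exact hi1 a h
    · omega
    · omega
    · exact hI2.2.1 _ h3
  · rintro a b c hab hbc
    rcases hab with h | ⟨ha1,ha2,rfl⟩ | ⟨ha1,ha2,rfl⟩ | ⟨ha1,hbb1,h4⟩
    · have hbb := hb1 a b h
      rcases hbc with h' | ⟨h1,h2,rfl⟩ | ⟨h1,h2,h3⟩ | ⟨h1,h2,h3⟩
      · exact Or.inl (htr1 a b c h h')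
      · exact Or.inr (Or.inl ⟨hbb.1, hbb.2.1, rfl⟩)
      · exact (by omega : False).elim
      · exact (by omega : False).elim
    · rcases hbc with h' | ⟨h1,h2,h3⟩ | ⟨h1,h2,h3⟩ | ⟨h1,h2,h3⟩
      · have := hb1 _ _ h'; exact (by omega : False).elim
      · exact (by omega : False).elim
      · exact (by omega : False).elim
      · exact (by omega : False).elim
    · rcases hbc with h' | ⟨h1,h2,h3⟩ | ⟨h1,h2,h3⟩ | ⟨h1,h2,h3⟩
      · have := hb1 _ _ h'; exact (by omega : False).elim
      · exact (by omega : False).elim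
      · exact (by omega : False).elim
      · exact (by omega : False).elim
    · rcases hbc with h' | ⟨h1,h2,h3⟩ | ⟨h1,h2,rfl⟩ | ⟨h1,h2,h3⟩
      · have := hb1 _ _ h'; exact (by omega : False).elim
      · exact (by omega : False).elim
      · refine Or.inr (Or.inr (Or.inl ⟨ha1, ?_, rfl⟩))
        have := closed k2 t I2 hI2 ht _ _ h4 (by omega)
        omega
      · exact Or.inr (Or.inr (Or.inr ⟨ha1, h2, hI2.2.2.1 _ _ _ h4 h3⟩))
  · rintro a b c hab hbc (h | ⟨h1,h2,rfl⟩ | ⟨h1,h2,h3⟩ | ⟨h1,h2,h3⟩)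
    · exact Or.inl (h41 a b c hab hbc h)
    · exact Or.inr (Or.inl ⟨by omega, by omega, rfl⟩)
    · exact (by omega : False).elim
    · exact Or.inr (Or.inr (Or.inr ⟨by omega, h2,
        hI2.2.2.2.1 (a - (k1+1)) (b - (k1+1)) (c - (k1+1)) (by omega) (by omega) h3⟩))
  · rintro a b c hab hbc (h | ⟨h1,h2,h3⟩ | ⟨h1,h2,h3⟩ | ⟨h1,h2,h3⟩)
    · exact Or.inl (h51 a b c hab hbc h)
    · exact (by omega : False).elim
    · exact Or.inr (Or.inr (Or.inl ⟨by omega, by omega, h3⟩))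
    · exact Or.inr (Or.inr (Or.inr ⟨by omega, h2,
        hI2.2.2.2.2 (a - (k1+1)) (b - (k1+1)) (c - (k1+1)) (by omega) (by omega) h3⟩))

lemma phi_not_from_mid (k1 t : ℕ) (I1 I2 : ℕ → ℕ → Prop) (hI1 : IsIntervalPoset k1 I1)
    (j : ℕ) : ¬ phi k1 t I1 I2 (k1+1) j := by
  rintro (h | ⟨h1,h2,h3⟩ | ⟨h1,h2,h3⟩ | ⟨h1,h2,h3⟩)
  · have := hI1.1 _ _ h; omega
  · omega
  · omega
  · omega

lemma phi_mem_comp (k1 k2 t : ℕ) (I1 I2 : ℕ → ℕ → Prop)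
    (hI1 : IsIntervalPoset k1 I1) (hI2 : IsIntervalPoset k2 I2) (ht : t ∈ Tset k2 I2) :
    phi k1 t I1 I2 ∈ Comp k1 k2 I1 I2 := by
  refine ⟨phi_isIP k1 k2 t I1 I2 hI1 hI2 ht, ?_, ?_, ?_, ?_⟩
  · intro a b ha1 ha2 hb1 hb2
    constructor
    · rintro (h | ⟨h1,h2,h3⟩ | ⟨h1,h2,h3⟩ | ⟨h1,h2,h3⟩)
      · exact h
      · exact (by omega : False).elim
      · exact (by omega : False).elim
      · exact (by omega : False).elim
    · exact Or.inl
  · intro a b ha1 ha2 hb1 hb2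
    constructor
    · rintro (h | ⟨h1,h2,h3⟩ | ⟨h1,h2,h3⟩ | ⟨h1,h2,h3⟩)
      · have := hI1.1 _ _ h; exact (by omega : False).elim
      · exact (by omega : False).elim
      · exact (by omega : False).elim
      · exact h3
    · intro h
      exact Or.inr (Or.inr (Or.inr ⟨by omega, by omega, h⟩))
  · intro i hi1 hi2; exact Or.inr (Or.inl ⟨hi1, hi2, rfl⟩)
  · intro j _; exact phi_not_from_mid k1 t I1 I2 hI1 j

lemma comp_eq_phi (k1 k2 : ℕ) (I1 I2 : ℕ → ℕ → Prop)
    (hI1 : IsIntervalPoset k1 I1) (hI2 : IsIntervalPoset k2 I2)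
    {I : ℕ → ℕ → Prop} (hI : I ∈ Comp k1 k2 I1 I2) :
    ∃ t ∈ Tset k2 I2, I = phi k1 t I1 I2 := by
  obtain ⟨⟨hbd, hirr, htr, h4, h5⟩, hA, hB, hC, hD⟩ := hI
  have F1 : ∀ j, ¬ I (k1+1) j := by
    intro j hj
    rcases lt_trichotomy j (k1+1) with h | rfl | h
    · have hj1 : 1 ≤ j := (hbd _ _ hj).2.2.1
      exact hirr _ (htr _ _ _ hj (hC j hj1 (by omega)))
    · exact hirr _ hj
    · exact hD j h hj
  have F2 : ∀ a b, a ≤ k1 → k1+1 < b → ¬ I a b := by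
    intro a b ha hb h
    exact F1 b (h4 a (k1+1) b (by omega) hb h)
  have F3 : ∀ a b, k1+1 < a → b < k1+1 → ¬ I a b := by
    intro a b ha hb h
    exact F1 b (h5 b (k1+1) a hb ha h)
  set S : Set ℕ := {s | 1 ≤ s ∧ I (k1+1+s) (k1+1)} with hSdef
  have hSsub : ∀ s ∈ S, 1 ≤ s ∧ s ≤ k2 := by
    intro s hs
    have := hbd _ _ hs.2
    exact ⟨hs.1, by omega⟩
  have hSdown : ∀ s ∈ S, ∀ s', 1 ≤ s' → s' ≤ s → s' ∈ S := by
    intro s hs s' h1 h2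
    rcases eq_or_lt_of_le h2 with rfl | h2
    · exact hs
    · exact ⟨h1, h5 (k1+1) (k1+1+s') (k1+1+s) (by omega) (by omega) hs.2⟩
  set t := sSup S with htdef
  have hbddS : BddAbove S := ⟨k2, fun s hs => (hSsub s hs).2⟩
  have hmem_iff : ∀ s, s ∈ S ↔ 1 ≤ s ∧ s ≤ t := by
    intro s
    constructor
    · intro hs; exact ⟨hs.1, le_csSup hbddS hs⟩
    · rintro ⟨h1, h2⟩
      rcases Set.eq_empty_or_nonempty S with he | hne
      · have hz : sSup (∅ : Set ℕ) = 0 := by simp [csSup_empty]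
        rw [htdef, he, hz] at h2
        omega
      · exact hSdown t (Nat.sSup_mem hne hbddS) s h1 h2
  have htk2 : t ≤ k2 := by
    rcases Set.eq_empty_or_nonempty S with he | hne
    · have hz : sSup (∅ : Set ℕ) = 0 := by simp [csSup_empty]
      rw [htdef, he, hz]; omega
    · exact (hSsub t (Nat.sSup_mem hne hbddS)).2
  have htT : t ∈ Tset k2 I2 := by
    refine ⟨htk2, ?_⟩
    rcases eq_or_lt_of_le htk2 with h | h
    · exact Or.inl h
    · refine Or.inr ⟨by omega, by omega, ?_⟩
      intro j hj hI2j
      have hjb := hI2.1 _ _ hI2j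
      have hIj : I (k1+1+(t+1)) (k1+1+j) := by
        have h' := (hB (k1+1+(t+1)) (k1+1+j) (by omega) (by omega) (by omega) (by omega)).mpr
        rw [show k1+1+(t+1) - (k1+1) = t+1 from by omega,
            show k1+1+j - (k1+1) = j from by omega] at h'
        exact h' hI2j
      have hjS : j ∈ S := (hmem_iff j).2 ⟨hjb.2.2.1, by omega⟩
      have htS : (t+1) ∈ S := ⟨by omega, htr _ _ _ hIj hjS.2⟩
      have := ((hmem_iff (t+1)).1 htS).2
      omega
  refine ⟨t, htT, ?_⟩
  funext a b
  apply propext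
  constructor
  · intro h
    have hab := hbd _ _ h
    rcases lt_trichotomy a (k1+1) with ha | rfl | ha
    · rcases lt_trichotomy b (k1+1) with hb | rfl | hb
      · exact Or.inl ((hA a b (by omega) (by omega) (by omega) (by omega)).1 h)
      · exact Or.inr (Or.inl ⟨by omega, by omega, rfl⟩)
      · exact absurd h (F2 a b (by omega) hb)
    · exact absurd h (F1 b)
    · rcases lt_trichotomy b (k1+1) with hb | rfl | hb
      · exact absurd h (F3 a b ha hb)
      · have hs : a - (k1+1) ∈ S :=
          ⟨by omega, by rw [show k1+1+(a-(k1+1)) = a from by omega]; exact h⟩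
        have := ((hmem_iff _).1 hs).2
        exact Or.inr (Or.inr (Or.inl ⟨ha, by omega, rfl⟩))
      · have h' := (hB a b (by omega) (by omega) (by omega) (by omega)).1 h
        exact Or.inr (Or.inr (Or.inr ⟨ha, hb, h'⟩))
  · rintro (h | ⟨h1,h2,rfl⟩ | ⟨h1,h2,rfl⟩ | ⟨h1,h2,h3⟩)
    · have := hI1.1 _ _ h
      exact (hA a b (by omega) (by omega) (by omega) (by omega)).2 h
    · exact hC a h1 h2
    · have hs : a - (k1+1) ∈ S := (hmem_iff _).2 ⟨by omega, by omega⟩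
      have h' := hs.2
      rwa [show k1+1+(a-(k1+1)) = a from by omega] at h'
    · have hb3 := hI2.1 _ _ h3
      exact (hB a b (by omega) (by omega) (by omega) (by omega)).2 h3

lemma treeStat_phi (k1 k2 t : ℕ) (I1 I2 : ℕ → ℕ → Prop)
    (hI1 : IsIntervalPoset k1 I1) (hI2 : IsIntervalPoset k2 I2) (ht : t ∈ Tset k2 I2) :
    treeStat (k1+k2+1) (phi k1 t I1 I2)
      = (Roots k1 I1).ncard + 1 + (Roots k2 I2 ∩ Set.Ioi t).ncard := by
  have hset : {k : ℕ | 1 ≤ k ∧ k ≤ k1+k2+1 ∧ ∀ j, j < k → ¬ phi k1 t I1 I2 k j}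
      = Roots k1 I1 ∪ {k1+1} ∪ (fun r => k1+1+r) '' (Roots k2 I2 ∩ Set.Ioi t) := by
    ext k
    simp only [Set.mem_union, Set.mem_singleton_iff, Set.mem_image, Set.mem_inter_iff,
      Set.mem_Ioi, Set.mem_setOf_eq]
    constructor
    · rintro ⟨hk1, hk2, hk3⟩
      rcases lt_trichotomy k (k1+1) with h | h | h
      · refine Or.inl (Or.inl ⟨hk1, by omega, ?_⟩)
        intro j hj hIj
        exact hk3 j hj (Or.inl hIj)
      · exact Or.inl (Or.inr h)
      · refine Or.inr ⟨k - (k1+1), ⟨⟨by omega, by omega, ?_⟩, ?_⟩, by omega⟩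
        · intro j hj hIj
          have hjb := hI2.1 _ _ hIj
          refine hk3 (k1+1+j) (by omega) ?_
          refine Or.inr (Or.inr (Or.inr ⟨h, by omega, ?_⟩))
          rw [show k1+1+j-(k1+1) = j from by omega]
          exact hIj
        · by_contra hle
          push_neg at hle
          exact hk3 (k1+1) h (Or.inr (Or.inr (Or.inl ⟨h, by omega, rfl⟩)))
    · rintro ((⟨h1,h2,h3⟩ | rfl) | ⟨r, ⟨⟨hr1, hr2, hr3⟩, hrt⟩, rfl⟩)
      · refine ⟨h1, by omega, ?_⟩
        rintro j hj (h | ⟨g1,g2,g3⟩ | ⟨g1,g2,g3⟩ | ⟨g1,g2,g3⟩)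
        · exact h3 j hj h
        · omega
        · omega
        · omega
      · exact ⟨by omega, by omega, fun j _ => phi_not_from_mid k1 t I1 I2 hI1 j⟩
      · refine ⟨by omega, by omega, ?_⟩
        rintro j hj (h | ⟨g1,g2,g3⟩ | ⟨g1,g2,g3⟩ | ⟨g1,g2,g3⟩)
        · have := hI1.1 _ _ h; omega
        · omega
        · omega
        · rw [show k1+1+r-(k1+1) = r from by omega] at g3
          exact hr3 _ (by omega) g3
  have hfin1 : (Roots k1 I1).Finite := roots_finite k1 I1
  have hfin3 : (Roots k2 I2 ∩ Set.Ioi t).Finite := (roots_finite k2 I2).inter_of_left _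
  have hd2 : Disjoint (Roots k1 I1) ({k1+1} : Set ℕ) := by
    rw [Set.disjoint_singleton_right]
    rintro ⟨_, h, _⟩
    omega
  have hd1 : Disjoint (Roots k1 I1 ∪ {k1+1})
      ((fun r => k1+1+r) '' (Roots k2 I2 ∩ Set.Ioi t)) := by
    rw [Set.disjoint_left]
    rintro x hx ⟨r, ⟨⟨hr1, hr2, _⟩, _⟩, hrx⟩
    simp only at hrx
    rcases hx with ⟨hx1, hx2, _⟩ | hx
    · omega
    · simp only [Set.mem_singleton_iff] at hx; omega
  have himg : ((fun r => k1+1+r) '' (Roots k2 I2 ∩ Set.Ioi t)).ncard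
      = (Roots k2 I2 ∩ Set.Ioi t).ncard :=
    Set.ncard_image_of_injective _ (fun x y h => by omega)
  have e0 : treeStat (k1+k2+1) (phi k1 t I1 I2)
      = (Roots k1 I1 ∪ {k1+1} ∪ (fun r => k1+1+r) '' (Roots k2 I2 ∩ Set.Ioi t)).ncard :=
    congrArg Set.ncard hset
  rw [e0, Set.ncard_union_eq hd1 (hfin1.union (Set.finite_singleton _)) (hfin3.image _),
      Set.ncard_union_eq hd2 hfin1 (Set.finite_singleton _), Set.ncard_singleton, himg]

lemma Tset_eq (k2 : ℕ) (I2 : ℕ → ℕ → Prop) :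
    Tset k2 I2 = insert k2 ((fun r => r - 1) '' Roots k2 I2) := by
  ext x
  simp only [Set.mem_insert_iff, Set.mem_image]
  constructor
  · rintro ⟨hx, rfl | hr⟩
    · exact Or.inl rfl
    · exact Or.inr ⟨x+1, hr, by omega⟩
  · rintro (rfl | ⟨r, hr, rfl⟩)
    · exact ⟨le_refl _, Or.inl rfl⟩
    · have h1 := hr.1
      have h2 := hr.2.1
      refine ⟨by omega, Or.inr ?_⟩
      rw [show r - 1 + 1 = r from by omega]
      exact hr

lemma tset_ncard (k2 : ℕ) (I2 : ℕ → ℕ → Prop) :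
    (Tset k2 I2).ncard = (Roots k2 I2).ncard + 1 := by
  rw [Tset_eq]
  have hnot : k2 ∉ (fun r => r - 1) '' Roots k2 I2 := by
    rintro ⟨r, ⟨hr1, hr2, _⟩, hrk⟩
    simp only at hrk
    omega
  have hinj : Set.InjOn (fun r => r - 1) (Roots k2 I2) := by
    intro r hr r' hr' h
    have := hr.1; have := hr'.1
    simp only at h
    omega
  rw [Set.ncard_insert_of_notMem hnot ((roots_finite k2 I2).image _),
      Set.ncard_image_of_injOn hinj]

lemma R_lt (k2 : ℕ) (I2 : ℕ → ℕ → Prop) {t1 t2 : ℕ} (h1 : t1 ∈ Tset k2 I2)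
    (h2 : t2 ∈ Tset k2 I2) (hlt : t1 < t2) :
    (Roots k2 I2 ∩ Set.Ioi t2).ncard < (Roots k2 I2 ∩ Set.Ioi t1).ncard := by
  have hsub : Roots k2 I2 ∩ Set.Ioi t2 ⊆ Roots k2 I2 ∩ Set.Ioi t1 :=
    Set.inter_subset_inter_right _ (Set.Ioi_subset_Ioi hlt.le)
  have hroot : t1 + 1 ∈ Roots k2 I2 := by
    rcases h1.2 with h | hr
    · exact absurd h2.1 (by omega)
    · exact hr
  apply Set.ncard_lt_ncard _ ((roots_finite k2 I2).inter_of_left _)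
  rw [Set.ssubset_iff_of_subset hsub]
  refine ⟨t1+1, ⟨hroot, Set.mem_Ioi.mpr (by omega)⟩, fun hmem => ?_⟩
  have := Set.mem_Ioi.mp hmem.2
  omega

end Stmt12Aux

open Stmt12Aux in
/-- Let `I1` and `I2` be interval-posets of sizes `k1` and `k2` with
`trees(I1) = p` and `trees(I2) = m`. Then the composition `𝔹(I1,I2)` contains exactly
`m+1` interval-posets (each of size `k1+k2+1` by definition), and the statistic `trees`
restricts to a bijection from `𝔹(I1,I2)` onto `{p+1, p+2, …, p+m+1}`. -/
theorem comp_card_and_trees (k1 k2 p m : ℕ) (I1 I2 : ℕ → ℕ → Prop)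
    (hI1 : IsIntervalPoset k1 I1) (hI2 : IsIntervalPoset k2 I2)
    (hp : treeStat k1 I1 = p) (hm : treeStat k2 I2 = m) :
    (Comp k1 k2 I1 I2).ncard = m + 1 ∧
    Set.BijOn (treeStat (k1 + k2 + 1)) (Comp k1 k2 I1 I2) (Set.Icc (p + 1) (p + m + 1)) := by
  subst hp hm
  have hCompEq : Comp k1 k2 I1 I2 = (fun t => phi k1 t I1 I2) '' Tset k2 I2 := by
    ext I
    constructor
    · intro hI
      obtain ⟨t, ht, rfl⟩ := comp_eq_phi k1 k2 I1 I2 hI1 hI2 hI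
      exact ⟨t, ht, rfl⟩
    · rintro ⟨t, ht, rfl⟩
      exact phi_mem_comp k1 k2 t I1 I2 hI1 hI2 ht
  set f : ℕ → ℕ := fun t => (Roots k1 I1).ncard + 1 + (Roots k2 I2 ∩ Set.Ioi t).ncard with hfdef
  have hfval : ∀ t ∈ Tset k2 I2, treeStat (k1+k2+1) (phi k1 t I1 I2) = f t :=
    fun t ht => treeStat_phi k1 k2 t I1 I2 hI1 hI2 ht
  have hfinj : Set.InjOn f (Tset k2 I2) := by
    intro t1 h1 t2 h2 heq
    rcases lt_trichotomy t1 t2 with h | h | h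
    · have := R_lt k2 I2 h1 h2 h
      simp only [hfdef] at heq
      omega
    · exact h
    · have := R_lt k2 I2 h2 h1 h
      simp only [hfdef] at heq
      omega
  have hphiinj : Set.InjOn (fun t => phi k1 t I1 I2) (Tset k2 I2) := by
    intro t1 h1 t2 h2 heq
    apply hfinj h1 h2
    rw [← hfval t1 h1, ← hfval t2 h2]
    simp only at heq
    rw [heq]
  have hcardT : (Tset k2 I2).ncard = treeStat k2 I2 + 1 := by
    rw [tset_ncard, treeStat_eq_roots]
  have hcardComp : (Comp k1 k2 I1 I2).ncard = treeStat k2 I2 + 1 := by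
    rw [hCompEq, Set.ncard_image_of_injOn hphiinj, hcardT]
  have hRle : ∀ t, (Roots k2 I2 ∩ Set.Ioi t).ncard ≤ (Roots k2 I2).ncard :=
    fun t => Set.ncard_le_ncard Set.inter_subset_left (roots_finite k2 I2)
  have hIccCard : (Set.Icc (treeStat k1 I1 + 1) (treeStat k1 I1 + treeStat k2 I2 + 1)).ncard
      = treeStat k2 I2 + 1 := by
    rw [← Finset.coe_Icc, Set.ncard_coe_finset, Nat.card_Icc]
    omega
  have hfsub : f '' Tset k2 I2
      ⊆ Set.Icc (treeStat k1 I1 + 1) (treeStat k1 I1 + treeStat k2 I2 + 1) := by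
    rintro v ⟨t, ht, rfl⟩
    have := hRle t
    rw [treeStat_eq_roots k1 I1, treeStat_eq_roots k2 I2]
    constructor
    · simp only [hfdef]; omega
    · simp only [hfdef]; omega
  have hfimg : f '' Tset k2 I2
      = Set.Icc (treeStat k1 I1 + 1) (treeStat k1 I1 + treeStat k2 I2 + 1) := by
    apply Set.eq_of_subset_of_ncard_le hfsub _ (Set.finite_Icc _ _)
    rw [Set.ncard_image_of_injOn hfinj, hcardT, hIccCard]
  refine ⟨hcardComp, ?_, ?_, ?_⟩
  · intro I hI
    rw [hCompEq] at hI
    obtain ⟨t, ht, rfl⟩ := hI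
    rw [← hfimg]
    exact ⟨t, ht, (hfval t ht).symm⟩
  · intro I hI J hJ heq
    rw [hCompEq] at hI hJ
    obtain ⟨t1, h1, rfl⟩ := hI
    obtain ⟨t2, h2, rfl⟩ := hJ
    have : f t1 = f t2 := by
      rw [← hfval t1 h1, ← hfval t2 h2]; exact heq
    rw [hfinj h1 h2 this]
  · intro v hv
    rw [← hfimg] at hv
    obtain ⟨t, ht, rfl⟩ := hv
    exact ⟨phi k1 t I1 I2, by rw [hCompEq]; exact ⟨t, ht, rfl⟩, hfval t ht⟩
end

section
/- For every interval-poset I of size n ≥ 1 there exists exactly one pair (I1, I2) of interval-posets such that I belongs to the composition 𝔹(I1, I2). -/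
open Polynomial

open BinTree

/-- For every interval-poset `I` of size `n ≥ 1` there is exactly one pair
`(I1, I2)` of interval-posets (of sizes `k1` and `k2` with `k1 + k2 + 1 = n`) such that `I`
belongs to the composition `𝔹(I1, I2)`. -/
theorem comp_unique_decomposition (n : ℕ) (hn : 1 ≤ n)
    (I : ℕ → ℕ → Prop) (hI : IsIntervalPoset n I) :
    ∃! q : (ℕ × (ℕ → ℕ → Prop)) × (ℕ × (ℕ → ℕ → Prop)),
      q.1.1 + q.2.1 + 1 = n ∧
      IsIntervalPoset q.1.1 q.1.2 ∧ IsIntervalPoset q.2.1 q.2.2 ∧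
      I ∈ Comp q.1.1 q.2.1 q.1.2 q.2.2 := by
  classical
  obtain ⟨hbd, hirr, htrans, hup, hdown⟩ := hI
  set P : ℕ → Prop := fun k => ∀ i, 1 ≤ i → i < k → I i k with hP
  have hP1 : P 1 := by intro i hi hi1; omega
  set m : ℕ := Nat.findGreatest P n with hm
  have hm1 : 1 ≤ m := Nat.le_findGreatest hn hP1
  have hmn : m ≤ n := Nat.findGreatest_le n
  have hPm : P m := Nat.findGreatest_spec hn hP1
  have hnoRel : ∀ j, m < j → ¬ I m j := by
    intro j hj hIj
    have hjn : j ≤ n := (hbd _ _ hIj).2.2.2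
    have hPj : P j := by
      intro i hi1 hij
      rcases lt_trichotomy i m with h | h | h
      · exact htrans _ _ _ (hPm i hi1 h) hIj
      · subst h; exact hIj
      · exact hup m i j h hij hIj
    exact Nat.findGreatest_is_greatest hj hjn hPj
  have hroot : ∀ m', 1 ≤ m' → m' ≤ n → P m' → (∀ j, m' < j → ¬ I m' j) → m' = m := by
    intro m' h1 h2 hPm' hno'
    rcases lt_trichotomy m' m with h | h | h
    · exact absurd (hPm m' h1 h) (hno' m h)
    · exact h
    · exact absurd (hPm' m hm1 h) (hnoRel m' h)
  set I1 : ℕ → ℕ → Prop := fun a b => 1 ≤ a ∧ a ≤ m - 1 ∧ 1 ≤ b ∧ b ≤ m - 1 ∧ I a b with hI1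
  set I2 : ℕ → ℕ → Prop :=
    fun a b => 1 ≤ a ∧ a ≤ n - m ∧ 1 ≤ b ∧ b ≤ n - m ∧ I (a + m) (b + m) with hI2
  have hIP1 : IsIntervalPoset (m - 1) I1 := by
    refine ⟨fun a b h => ⟨h.1, h.2.1, h.2.2.1, h.2.2.2.1⟩,
      fun a h => hirr a h.2.2.2.2,
      fun a b c h1 h2 => ⟨h1.1, h1.2.1, h2.2.2.1, h2.2.2.2.1, htrans _ _ _ h1.2.2.2.2 h2.2.2.2.2⟩,
      ?_, ?_⟩
    · rintro a b c hab hbc ⟨h1, h2, h3, h4, h5⟩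
      exact ⟨by omega, by omega, h3, h4, hup a b c hab hbc h5⟩
    · rintro a b c hab hbc ⟨h1, h2, h3, h4, h5⟩
      exact ⟨by omega, by omega, h3, h4, hdown a b c hab hbc h5⟩
  have hIP2 : IsIntervalPoset (n - m) I2 := by
    refine ⟨fun a b h => ⟨h.1, h.2.1, h.2.2.1, h.2.2.2.1⟩,
      fun a h => hirr _ h.2.2.2.2,
      fun a b c h1 h2 => ⟨h1.1, h1.2.1, h2.2.2.1, h2.2.2.2.1, htrans _ _ _ h1.2.2.2.2 h2.2.2.2.2⟩,
      ?_, ?_⟩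
    · rintro a b c hab hbc ⟨h1, h2, h3, h4, h5⟩
      exact ⟨by omega, by omega, h3, h4,
        hup (a + m) (b + m) (c + m) (by omega) (by omega) h5⟩
    · rintro a b c hab hbc ⟨h1, h2, h3, h4, h5⟩
      exact ⟨by omega, by omega, h3, h4,
        hdown (a + m) (b + m) (c + m) (by omega) (by omega) h5⟩
  have hmem : I ∈ Comp (m - 1) (n - m) I1 I2 := by
    refine ⟨?_, ?_, ?_, ?_, ?_⟩
    · have h : m - 1 + (n - m) + 1 = n := by omega
      rw [h]; exact ⟨hbd, hirr, htrans, hup, hdown⟩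
    · intro a b h1 h2 h3 h4
      simp only [hI1]
      exact ⟨fun h => ⟨h1, h2, h3, h4, h⟩, fun h => h.2.2.2.2⟩
    · intro a b h1 h2 h3 h4
      simp only [hI2]
      constructor
      · intro h
        refine ⟨by omega, by omega, by omega, by omega, ?_⟩
        have e1 : a - (m - 1 + 1) + m = a := by omega
        have e2 : b - (m - 1 + 1) + m = b := by omega
        rwa [e1, e2]
      · intro h
        have h5 := h.2.2.2.2
        have e1 : a - (m - 1 + 1) + m = a := by omega
        have e2 : b - (m - 1 + 1) + m = b := by omega
        rwa [e1, e2] at h5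
    · intro i h1 h2
      have e : m - 1 + 1 = m := by omega
      rw [e]
      exact hPm i h1 (by omega)
    · intro j hj
      have e : m - 1 + 1 = m := by omega
      rw [e] at hj ⊢
      exact hnoRel j hj
  refine ⟨((m - 1, I1), (n - m, I2)), ⟨by simp; omega, hIP1, hIP2, hmem⟩, ?_⟩
  rintro ⟨⟨k1', I1'⟩, ⟨k2', I2'⟩⟩ ⟨hsum, hq1, hq2, hqIP, hc1, hc2, hc3, hc4⟩
  simp only at hsum hq1 hq2 hc1 hc2 hc3 hc4 ⊢
  have hmeq : k1' + 1 = m := by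
    apply hroot
    · omega
    · omega
    · intro i hi1 hik; exact hc3 i hi1 (by omega)
    · exact hc4
  have hk1 : k1' = m - 1 := by omega
  have hk2 : k2' = n - m := by omega
  have hI1eq : I1' = I1 := by
    funext a b
    apply propext
    have hbd1 := hq1.1 a b
    constructor
    · intro h
      obtain ⟨ha1, ha2, hb1, hb2⟩ := hbd1 h
      exact ⟨ha1, by omega, hb1, by omega, ((hc1 a b ha1 ha2 hb1 hb2).2 h)⟩
    · intro h
      exact (hc1 a b h.1 (by omega) h.2.2.1 (by omega)).1 h.2.2.2.2
  have hI2eq : I2' = I2 := by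
    funext a b
    apply propext
    have hbd2 := hq2.1 a b
    constructor
    · intro h
      obtain ⟨ha1, ha2, hb1, hb2⟩ := hbd2 h
      have hc := hc2 (a + m) (b + m) (by omega) (by omega) (by omega) (by omega)
      have e1 : a + m - (k1' + 1) = a := by omega
      have e2 : b + m - (k1' + 1) = b := by omega
      rw [e1, e2] at hc
      exact ⟨ha1, by omega, hb1, by omega, hc.2 h⟩
    · intro h
      obtain ⟨ha1, ha2, hb1, hb2, hab⟩ := h
      have hc := hc2 (a + m) (b + m) (by omega) (by omega) (by omega) (by omega)
      have e1 : a + m - (k1' + 1) = a := by omega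
      have e2 : b + m - (k1' + 1) = b := by omega
      rw [e1, e2] at hc
      exact hc.1 hab
  simp [hk1, hk2, hI1eq, hI2eq]
end

section
/- Let T = x(T1,T2) be a binary tree with left subtree T1 and right subtree T2. Then the set of interval-posets {IP[T',T] : T' a binary tree with T' ≤ T in the Tamari order} is equal to the union, over all binary trees T1' ≤ T1 and T2' ≤ T2, of the compositions 𝔹(IP[T1',T1], IP[T2',T2]). -/
open Polynomial

open BinTree

/-!
In the binary-search labelling, a label `a > b` lies in the subtree of `b` iff
`a ≤ b + rightSize T b`, and right rotations only enlarge right subtrees; so for `T' ≤ T` the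
decreasing relations of `T'` lie in the subtree order of `T`, which makes `IP[T', T]` an
interval-poset.

The trees below `x(T1, T2)` are the grafts of `t1 ≤ T1` onto `t2 ≤ T2`: the root `T1.size + 1`
keeps `t1` as left subtree and takes the first `r` nodes of `t2` as right subtree, `r` being a
right-closed prefix of `t2`. The interval-poset of such a graft is the element of
`𝔹(IP[t1, T1], IP[t2, T2])` whose root lies above exactly `r` vertices of the second block.
Conversely, in any element of the composition the vertices of the second block below the root
form an initial segment, and transitivity forces its length to be a right-closed prefix of `t2`.
-/

namespace BinTree

lemma Rot.size_eq {U V : BinTree} (h : Rot U V) : U.size = V.size := by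
  induction h <;> simp only [size] <;> omega

lemma TamariLE.size_eq {U V : BinTree} (h : TamariLE U V) : U.size = V.size := by
  induction h with
  | refl => rfl
  | tail _ h ih => rw [ih, h.size_eq]

lemma TamariLE.node_congr {L L' R R' : BinTree} (hL : TamariLE L L') (hR : TamariLE R R') :
    TamariLE (node L R) (node L' R') :=
  (hL.lift (fun X => node X R) fun _ _ => Rot.left R).trans
    (hR.lift (fun X => node L' X) fun _ _ => Rot.right L')

lemma not_rot_leaf {U : BinTree} : ¬ Rot U leaf := nofun

lemma rot_node_iff {U P Q : BinTree} :
    Rot U (node P Q) ↔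
      (∃ B C, Q = node B C ∧ U = node (node P B) C) ∨
      (∃ L, Rot L P ∧ U = node L Q) ∨ (∃ R, Rot R Q ∧ U = node P R) := by
  constructor
  · rintro (_ | ⟨_, h⟩ | ⟨_, h⟩)
    exacts [Or.inl ⟨_, _, rfl, rfl⟩, Or.inr (Or.inl ⟨_, h, rfl⟩),
      Or.inr (Or.inr ⟨_, h, rfl⟩)]
  · rintro (⟨B, C, rfl, rfl⟩ | ⟨L, h, rfl⟩ | ⟨R, h, rfl⟩)
    exacts [Rot.root P B C, Rot.left Q h, Rot.right P h]

lemma inSub_bounds {T : BinTree} {a b : ℕ} (h : inSub T a b) :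
    1 ≤ a ∧ a ≤ T.size ∧ 1 ≤ b ∧ b ≤ T.size := by
  induction T generalizing a b with
  | leaf => exact h.elim
  | node l r ihl ihr =>
    simp only [size]
    rcases h with ⟨rfl, h⟩ | h | ⟨-, -, h⟩
    · omega
    · have := ihl h; omega
    · have := ihr h; omega

lemma inSub_trans {T : BinTree} {a b c : ℕ} (hab : inSub T a b) (hbc : inSub T b c) :
    inSub T a c := by
  induction T generalizing a b c with
  | leaf => exact hab.elim
  | node l r ihl ihr =>
    have ha := inSub_bounds hab
    simp only [size] at ha
    rcases hbc with ⟨rfl, -⟩ | hbc | ⟨hb, hc, hbc⟩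
    · exact Or.inl ⟨rfl, ha.1, ha.2.1⟩
    · have := inSub_bounds hbc
      rcases hab with ⟨rfl, -⟩ | hab | ⟨-, hb', -⟩
      · omega
      · exact Or.inr (Or.inl (ihl hab hbc))
      · omega
    · rcases hab with ⟨rfl, -⟩ | hab | ⟨ha', -, hab⟩
      · omega
      · have := inSub_bounds hab; omega
      · exact Or.inr (Or.inr ⟨ha', hc, ihr hab hbc⟩)

lemma inSub_antisymm {T : BinTree} {a b : ℕ} (hab : inSub T a b) (hba : inSub T b a) :
    a = b := by
  induction T generalizing a b with
  | leaf => exact hab.elim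
  | node l r ihl ihr =>
    rcases hab with ⟨rfl, -⟩ | hab | ⟨ha, hb, hab⟩
    · rcases hba with ⟨rfl, -⟩ | hba | ⟨hb', -, -⟩
      · rfl
      · have := inSub_bounds hba; omega
      · omega
    · have := inSub_bounds hab
      rcases hba with ⟨rfl, -⟩ | hba | ⟨-, hb', -⟩
      · omega
      · exact ihl hab hba
      · omega
    · rcases hba with ⟨rfl, -⟩ | hba | ⟨-, -, hba⟩
      · omega
      · have := inSub_bounds hba; omega
      · have := ihr hab hba; omega

lemma inSub_of_between {T : BinTree} {x y z : ℕ} (h : inSub T x z)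
    (hy : x ≤ y ∧ y ≤ z ∨ z ≤ y ∧ y ≤ x) : inSub T y z := by
  induction T generalizing x y z with
  | leaf => exact h.elim
  | node l r ihl ihr =>
    have hb := inSub_bounds h
    simp only [size] at hb
    rcases h with ⟨rfl, -⟩ | h | ⟨hx, hz, h⟩
    · exact Or.inl ⟨rfl, by omega⟩
    · exact Or.inr (Or.inl (ihl h hy))
    · exact Or.inr (Or.inr ⟨by omega, hz, ihr h (by omega)⟩)

/-- The size of the right subtree of the node labelled `b`, and `0` for labels outside
`1, …, T.size`. -/
def rightSize : BinTree → ℕ → ℕ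
  | leaf, _ => 0
  | node l r, b =>
      if b < l.size + 1 then rightSize l b
      else if b = l.size + 1 then r.size
      else rightSize r (b - (l.size + 1))

lemma add_rightSize_le {T : BinTree} {b : ℕ} (h1 : 1 ≤ b) (h2 : b ≤ T.size) :
    b + rightSize T b ≤ T.size := by
  induction T generalizing b with
  | leaf => simp only [size] at h2; omega
  | node l r ihl ihr =>
    simp only [rightSize, size] at *
    split_ifs
    · have := ihl h1 (by omega); omega
    · omega
    · have := ihr (b := b - (l.size + 1)) (by omega) (by omega); omega

lemma inSub_iff_le_add_rightSize (T : BinTree) {a b : ℕ} (h : b < a) :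
    inSub T a b ↔ 1 ≤ b ∧ a ≤ b + rightSize T b := by
  induction T generalizing a b with
  | leaf => simp only [inSub, rightSize, false_iff]; omega
  | node l r ihl ihr =>
    simp only [inSub, rightSize]
    split_ifs with hl hroot
    · rw [← ihl h]
      constructor
      · rintro (⟨rfl, -⟩ | h' | ⟨-, h', -⟩)
        exacts [absurd hl (lt_irrefl _), h', absurd hl (by omega)]
      · exact fun h' => Or.inr (Or.inl h')
    · constructor
      · rintro (⟨-, -, h'⟩ | h' | ⟨-, h', -⟩)
        · omega
        · have := inSub_bounds h'; omega
        · omega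
      · exact fun h' => Or.inl ⟨hroot, by omega, by omega⟩
    · have := ihr (by omega : b - (l.size + 1) < a - (l.size + 1))
      constructor
      · rintro (⟨hb, -⟩ | h' | ⟨ha, -, h'⟩)
        · omega
        · have := inSub_bounds h'; omega
        · have := this.mp h'; omega
      · exact fun h' => Or.inr (Or.inr ⟨by omega, by omega, this.mpr (by omega)⟩)

lemma rightSize_node_of_le {l r : BinTree} {b : ℕ} (h : b ≤ l.size) :
    rightSize (node l r) b = rightSize l b := by
  rw [rightSize, if_pos (by omega)]

lemma Rot.rightSize_le {U V : BinTree} (h : Rot U V) (b : ℕ) :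
    rightSize U b ≤ rightSize V b := by
  induction h generalizing b with
  | root A B C =>
    simp only [rightSize]
    split_ifs <;> simp only [size] at * <;> first | rfl | omega | (apply le_of_eq; congr 1; omega)
  | left R h ih =>
    simp only [rightSize, h.size_eq]
    split_ifs <;> first | rfl | exact ih _
  | right L h ih =>
    simp only [rightSize, h.size_eq]
    split_ifs <;> first | rfl | exact ih _

lemma TamariLE.rightSize_le {U V : BinTree} (h : TamariLE U V) (b : ℕ) :
    rightSize U b ≤ rightSize V b := by
  induction h with
  | refl => rfl
  | tail _ h ih => exact ih.trans (h.rightSize_le b)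

lemma TamariLE.inSub_of_lt {T' T : BinTree} (h : TamariLE T' T) {a b : ℕ} (hba : b < a)
    (hab : inSub T' a b) : inSub T a b := by
  rw [inSub_iff_le_add_rightSize _ hba] at hab ⊢
  have := h.rightSize_le b
  omega

lemma IPrel_iff {T' T : BinTree} {a b : ℕ} :
    IPrel T' T a b ↔ (b < a ∧ inSub T' a b) ∨ (a < b ∧ inSub T a b) := by
  simp only [IPrel, decRel, incRel, bstRel]
  constructor
  · rintro (⟨h, -, h'⟩ | ⟨h, -, h'⟩)
    exacts [Or.inl ⟨h, h'⟩, Or.inr ⟨h, h'⟩]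
  · rintro (⟨h, h'⟩ | ⟨h, h'⟩)
    exacts [Or.inl ⟨h, h.ne', h'⟩, Or.inr ⟨h, h.ne, h'⟩]

lemma IPrel_trans {T' T : BinTree} (hle : TamariLE T' T) {a b c : ℕ}
    (hab : IPrel T' T a b) (hbc : IPrel T' T b c) : IPrel T' T a c := by
  rw [IPrel_iff] at hab hbc ⊢
  rcases hab with ⟨hba, hab⟩ | ⟨hab', hab⟩ <;>
    rcases hbc with ⟨hcb, hbc⟩ | ⟨hbc', hbc⟩
  · exact Or.inl ⟨hcb.trans hba, inSub_trans hab hbc⟩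
  · -- were `c ≤ a`, then `b < c ≤ a` would put `c` in the subtree of `b` in `T`
    have habT := hle.inSub_of_lt hba hab
    refine Or.inr ⟨?_, inSub_trans habT hbc⟩
    by_contra! hca
    have := inSub_antisymm (inSub_of_between habT (Or.inr ⟨hbc'.le, hca⟩)) hbc
    omega
  · rcases lt_trichotomy a c with hac | rfl | hca
    · exact Or.inr ⟨hac, inSub_trans hab (hle.inSub_of_lt hcb hbc)⟩
    · have := inSub_antisymm hab (hle.inSub_of_lt hcb hbc)
      omega
    · exact Or.inl ⟨hca, inSub_of_between hbc (Or.inr ⟨hca.le, hab'.le⟩)⟩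
  · exact Or.inr ⟨hab'.trans hbc', inSub_trans hab hbc⟩

lemma isIntervalPoset_IPrel {T' T : BinTree} (hle : TamariLE T' T) :
    IsIntervalPoset T.size (IPrel T' T) := by
  refine ⟨fun a b h => ?_, fun a h => ?_, fun a b c => IPrel_trans hle,
    fun a b c hab hbc h => ?_, fun a b c hab hbc h => ?_⟩ <;> rw [IPrel_iff] at h
  · rcases h with ⟨-, h⟩ | ⟨-, h⟩
    · exact hle.size_eq ▸ inSub_bounds h
    · exact inSub_bounds h
  · rcases h with ⟨h, -⟩ | ⟨h, -⟩ <;> exact lt_irrefl a h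
  · rcases h with ⟨h, -⟩ | ⟨-, h⟩
    · omega
    · exact IPrel_iff.mpr (Or.inr ⟨hbc, inSub_of_between h (Or.inl ⟨hab.le, hbc.le⟩)⟩)
  · rcases h with ⟨-, h⟩ | ⟨h, -⟩
    · exact IPrel_iff.mpr (Or.inl ⟨hab, inSub_of_between h (Or.inr ⟨hab.le, hbc.le⟩)⟩)
    · omega

/-- The right-closed prefixes of `t` are `0` and the sizes of the subtrees rooted on the left
border of `t`. -/
def IsRightClosedPrefix (t : BinTree) (r : ℕ) : Prop :=
  r ≤ t.size ∧ ∀ j, 1 ≤ j → j ≤ r → j + rightSize t j ≤ r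

lemma isRightClosedPrefix_size (t : BinTree) : IsRightClosedPrefix t t.size :=
  ⟨le_rfl, fun _ h1 h2 => add_rightSize_le h1 h2⟩

lemma IsRightClosedPrefix.node_of_left {A : BinTree} {r : ℕ} (h : IsRightClosedPrefix A r)
    (B : BinTree) : IsRightClosedPrefix (node A B) r :=
  ⟨by have := h.1; simp only [size]; omega, fun j h1 h2 => by
    rw [rightSize_node_of_le (by have := h.1; omega)]; exact h.2 j h1 h2⟩

lemma IsRightClosedPrefix.of_node {A B : BinTree} {r : ℕ} (h : IsRightClosedPrefix (node A B) r)
    (hr : r ≠ (node A B).size) : IsRightClosedPrefix A r := by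
  have hrA : r ≤ A.size := by
    by_contra! hlt
    have h1 := h.1
    have h2 := h.2 (A.size + 1) (by omega) hlt
    rw [rightSize, if_neg (by omega), if_pos rfl] at h2
    simp only [size] at h1 hr
    omega
  refine ⟨hrA, fun j h1 h2 => ?_⟩
  rw [← rightSize_node_of_le (r := B) (by omega)]
  exact h.2 j h1 h2

/-- Walking down the left border of `t2` to its subtree `s` of size `r`, replace `s` by the
node `x(t1, s)`. -/
def graft : BinTree → ℕ → BinTree → BinTree
  | t1, _, leaf => node t1 leaf
  | t1, r, node A B =>
      if r = A.size + B.size + 1 then node t1 (node A B) else node (graft t1 r A) B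

lemma size_graft (t1 : BinTree) (r : ℕ) (t2 : BinTree) :
    (graft t1 r t2).size = t1.size + t2.size + 1 := by
  induction t2 with
  | leaf => rfl
  | node A B ihA _ =>
    rw [graft]
    split_ifs
    · rfl
    · simp only [size, ihA]; omega

lemma graft_size_self (t1 t2 : BinTree) : graft t1 t2.size t2 = node t1 t2 := by
  cases t2 with
  | leaf => rfl
  | node A B => rw [graft, if_pos (by simp only [size])]

lemma IsRightClosedPrefix.graft_node {A : BinTree} {r : ℕ} (h : IsRightClosedPrefix A r)
    (t1 B : BinTree) : graft t1 r (node A B) = node (graft t1 r A) B := by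
  rw [graft, if_neg (by have := h.1; omega)]

lemma IsRightClosedPrefix.rightSize_graft {t2 : BinTree} {r : ℕ} (h : IsRightClosedPrefix t2 r)
    (t1 : BinTree) (b : ℕ) :
    rightSize (graft t1 r t2) b =
      if b < t1.size + 1 then rightSize t1 b
      else if b = t1.size + 1 then r
      else rightSize t2 (b - (t1.size + 1)) := by
  induction t2 generalizing r with
  | leaf =>
    obtain rfl : r = 0 := Nat.le_zero.mp h.1
    rfl
  | node A B ihA _ =>
    by_cases hfull : r = (node A B).size
    · subst hfull
      rw [graft_size_self]
      rfl
    · have hA := h.of_node hfull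
      rw [hA.graft_node, rightSize, size_graft, ihA hA, rightSize]
      split_ifs <;> first | rfl | omega | (congr 1; omega)

lemma IsRightClosedPrefix.graft_tamariLE {t2 : BinTree} {r : ℕ} (h : IsRightClosedPrefix t2 r)
    (t1 : BinTree) : TamariLE (graft t1 r t2) (node t1 t2) := by
  induction t2 generalizing r with
  | leaf =>
    obtain rfl : r = 0 := Nat.le_zero.mp h.1
    exact .refl
  | node A B ihA _ =>
    by_cases hfull : r = (node A B).size
    · rw [hfull, graft_size_self]
      exact .refl
    · have hA := h.of_node hfull
      rw [hA.graft_node]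
      exact ((ihA hA).node_congr .refl).tail (Rot.root t1 A B)

def IsGraftBelow (T1 T2 U : BinTree) : Prop :=
  ∃ t1 r t2, TamariLE t1 T1 ∧ TamariLE t2 T2 ∧ IsRightClosedPrefix t2 r ∧ U = graft t1 r t2

lemma isGraftBelow_of_rot_graft {t1 t2 U : BinTree} {r : ℕ} (hr : IsRightClosedPrefix t2 r)
    (h : Rot U (graft t1 r t2)) : IsGraftBelow t1 t2 U := by
  induction t2 generalizing t1 U r with
  | leaf =>
    obtain rfl : r = 0 := Nat.le_zero.mp hr.1
    rcases rot_node_iff.mp h with ⟨B, C, hQ, -⟩ | ⟨L, hL, rfl⟩ | ⟨R, hR, -⟩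
    · cases hQ
    · exact ⟨L, 0, leaf, .single hL, .refl, isRightClosedPrefix_size leaf, rfl⟩
    · exact absurd hR not_rot_leaf
  | node A B ihA _ =>
    by_cases hfull : r = (node A B).size
    · subst hfull
      rw [graft_size_self] at h
      rcases rot_node_iff.mp h with ⟨Y, Z, hQ, rfl⟩ | ⟨L, hL, rfl⟩ | ⟨R, hR, rfl⟩
      · cases hQ
        have hA := isRightClosedPrefix_size A
        exact ⟨t1, A.size, node A B, .refl, .refl, hA.node_of_left B,
          by rw [hA.graft_node, graft_size_self]⟩
      · exact ⟨L, _, node A B, .single hL, .refl, isRightClosedPrefix_size _,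
          (graft_size_self _ _).symm⟩
      · exact ⟨t1, _, R, .refl, .single hR, isRightClosedPrefix_size _,
          (graft_size_self _ _).symm⟩
    · have hA := hr.of_node hfull
      rw [hA.graft_node] at h
      rcases rot_node_iff.mp h with ⟨Y, Z, rfl, rfl⟩ | ⟨L, hL, rfl⟩ | ⟨R, hR, rfl⟩
      · exact ⟨t1, r, node (node A Y) Z, .refl, .single (Rot.root A Y Z),
          (hA.node_of_left Y).node_of_left Z,
          by rw [(hA.node_of_left Y).graft_node, hA.graft_node]⟩
      · obtain ⟨t1', r', A', h1, hA', hr', rfl⟩ := ihA hA hL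
        exact ⟨t1', r', node A' B, h1, hA'.node_congr .refl, hr'.node_of_left B,
          (hr'.graft_node _ _).symm⟩
      · exact ⟨t1, r, node A R, .refl, TamariLE.node_congr .refl (.single hR), hA.node_of_left R,
          (hA.graft_node _ _).symm⟩

theorem tamariLE_node_iff {T1 T2 U : BinTree} :
    TamariLE U (node T1 T2) ↔ IsGraftBelow T1 T2 U := by
  constructor
  · intro h
    induction h using Relation.ReflTransGen.head_induction_on with
    | refl => exact ⟨T1, T2.size, T2, .refl, .refl, isRightClosedPrefix_size T2,
        (graft_size_self T1 T2).symm⟩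
    | head hrot _ ih =>
      obtain ⟨t1, r, t2, h1, h2, hr, rfl⟩ := ih
      obtain ⟨t1', r', t2', h1', h2', hr', rfl⟩ := isGraftBelow_of_rot_graft hr hrot
      exact ⟨t1', r', t2', h1'.trans h1, h2'.trans h2, hr', rfl⟩
  · rintro ⟨t1, r, t2, h1, h2, hr, rfl⟩
    exact (hr.graft_tamariLE t1).trans (h1.node_congr h2)

end BinTree

/-- The general element of `Comp k1 k2 I1 I2`, in which `k1 + 1` lies above the first `r`
vertices of the second block. -/
def compRel (k1 k2 : ℕ) (I1 I2 : ℕ → ℕ → Prop) (r a b : ℕ) : Prop :=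
  (1 ≤ a ∧ a ≤ k1 ∧ 1 ≤ b ∧ b ≤ k1 ∧ I1 a b) ∨
  (k1 + 2 ≤ a ∧ a ≤ k1 + k2 + 1 ∧ k1 + 2 ≤ b ∧ b ≤ k1 + k2 + 1 ∧
    I2 (a - (k1 + 1)) (b - (k1 + 1))) ∨
  (b = k1 + 1 ∧ 1 ≤ a ∧ a ≤ k1 + 1 + r ∧ a ≠ k1 + 1)

section Comp

variable {k1 k2 : ℕ} {I1 I2 I : ℕ → ℕ → Prop}

lemma compRel_mem_comp {r : ℕ} (h : IsIntervalPoset (k1 + k2 + 1) (compRel k1 k2 I1 I2 r)) :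
    compRel k1 k2 I1 I2 r ∈ Comp k1 k2 I1 I2 := by
  refine ⟨h, fun a b ha1 ha2 hb1 hb2 => ⟨?_, ?_⟩, fun a b ha1 ha2 hb1 hb2 => ⟨?_, ?_⟩,
    fun i hi1 hi2 => Or.inr (Or.inr ⟨rfl, hi1, by omega, by omega⟩), fun j hj => ?_⟩
  · rintro (⟨-, -, -, -, h⟩ | ⟨h, -⟩ | ⟨rfl, -⟩)
    exacts [h, by omega, by omega]
  · exact fun h => Or.inl ⟨ha1, ha2, hb1, hb2, h⟩
  · rintro (⟨-, h, -⟩ | ⟨-, -, -, -, h⟩ | ⟨rfl, -⟩)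
    exacts [by omega, h, by omega]
  · exact fun h => Or.inr (Or.inl ⟨ha1, ha2, hb1, hb2, h⟩)
  · rintro (⟨-, h, -⟩ | ⟨h, -⟩ | ⟨rfl, -⟩) <;> omega

lemma not_rel_of_mem_comp_of_le_left (hI : I ∈ Comp k1 k2 I1 I2) {a b : ℕ} (ha : k1 + 1 ≤ a)
    (hb : b ≤ k1) : ¬ I a b := by
  obtain ⟨⟨hbd, hirr, htr, -, hdown⟩, -, -, hroot, -⟩ := hI
  intro hab
  have hb1 := (hbd a b hab).2.2.1
  have hrootb : I (k1 + 1) b := by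
    rcases ha.eq_or_lt with rfl | hlt
    exacts [hab, hdown b (k1 + 1) a (by omega) hlt hab]
  exact hirr _ (htr _ _ _ hrootb (hroot b hb1 hb))

lemma not_rel_of_mem_comp_of_le_right (hI : I ∈ Comp k1 k2 I1 I2) {a b : ℕ} (ha : a ≤ k1 + 1)
    (hb : k1 + 2 ≤ b) : ¬ I a b := by
  obtain ⟨⟨-, -, -, hup, -⟩, -, -, -, hnroot⟩ := hI
  intro hab
  rcases ha.eq_or_lt with rfl | hlt
  exacts [hnroot b (by omega) hab, hnroot b (by omega) (hup a (k1 + 1) b hlt (by omega) hab)]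

lemma exists_rel_root_iff_of_mem_comp (hI : I ∈ Comp k1 k2 I1 I2) :
    ∃ r ≤ k2, ∀ a, k1 + 1 < a → (I a (k1 + 1) ↔ a ≤ k1 + 1 + r) := by
  obtain ⟨⟨hbd, -, -, -, hdown⟩, -⟩ := hI
  have hlower : IsLowerSet {j | I (k1 + 2 + j) (k1 + 1)} := fun i j hji hi =>
    (hji.eq_or_lt).elim (· ▸ hi) fun hlt => hdown (k1 + 1) _ _ (by omega) (by omega) hi
  have hk2 : k2 ∉ {j | I (k1 + 2 + j) (k1 + 1)} := fun h => by have := hbd _ _ h; omega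
  obtain ⟨r, hr⟩ := hlower.eq_univ_or_Iio.resolve_left fun h => hk2 (h ▸ trivial)
  refine ⟨r, le_of_not_gt fun hlt => hk2 (hr ▸ hlt), fun a ha => ?_⟩
  have := Set.ext_iff.mp hr (a - (k1 + 2))
  simp only [Set.mem_ofPred_eq, Set.mem_Iio] at this
  rw [show k1 + 2 + (a - (k1 + 2)) = a by omega] at this
  rw [this]
  omega

lemma eq_compRel_of_mem_comp (hI : I ∈ Comp k1 k2 I1 I2) :
    ∃ r ≤ k2, I = compRel k1 k2 I1 I2 r := by
  obtain ⟨r, hr, hroot⟩ := exists_rel_root_iff_of_mem_comp hI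
  refine ⟨r, hr, funext₂ fun a b => propext ⟨fun hab => ?_, ?_⟩⟩
  · obtain ⟨⟨hbd, hirr, -⟩, h1, h2, -⟩ := id hI
    have := hbd a b hab
    rcases lt_trichotomy b (k1 + 1) with hb | rfl | hb
    · have ha : a ≤ k1 :=
        le_of_not_gt fun ha => not_rel_of_mem_comp_of_le_left hI ha (by omega) hab
      exact Or.inl ⟨by omega, ha, by omega, by omega,
        (h1 a b (by omega) ha (by omega) (by omega)).mp hab⟩
    · refine Or.inr (Or.inr ⟨rfl, by omega, ?_, fun h => hirr a (h ▸ hab)⟩)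
      rcases le_or_gt a (k1 + 1) with ha | ha
      exacts [by omega, (hroot a ha).mp hab]
    · have ha : k1 + 1 < a :=
        lt_of_not_ge fun ha => not_rel_of_mem_comp_of_le_right hI ha (by omega) hab
      exact Or.inr (Or.inl ⟨by omega, by omega, by omega, by omega,
        (h2 a b (by omega) (by omega) (by omega) (by omega)).mp hab⟩)
  · obtain ⟨-, h1, h2, hleft, -⟩ := hI
    rintro (⟨ha1, ha2, hb1, hb2, h⟩ | ⟨ha1, ha2, hb1, hb2, h⟩ | ⟨rfl, ha1, ha2, ha3⟩)
    · exact (h1 a b ha1 ha2 hb1 hb2).mpr h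
    · exact (h2 a b ha1 ha2 hb1 hb2).mpr h
    · rcases lt_or_gt_of_ne ha3 with ha | ha
      exacts [hleft a ha1 (by omega), (hroot a ha).mpr ha2]

end Comp

namespace BinTree

lemma IsRightClosedPrefix.of_compRel_trans {k1 k2 r : ℕ} {I1 : ℕ → ℕ → Prop}
    {t2 T2 : BinTree} (hr : r ≤ t2.size) (hk2 : t2.size ≤ k2)
    (htr : ∀ a b c, compRel k1 k2 I1 (IPrel t2 T2) r a b →
      compRel k1 k2 I1 (IPrel t2 T2) r b c →
      compRel k1 k2 I1 (IPrel t2 T2) r a c) :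
    IsRightClosedPrefix t2 r := by
  refine ⟨hr, fun j hj1 hjr => le_of_not_gt fun hlt => ?_⟩
  -- `k1 + 1 + j + rightSize t2 j` lies below `k1 + 1 + j`, which lies below `k1 + 1`
  have hjs := add_rightSize_le (T := t2) hj1 (by omega)
  have hdec : IPrel t2 T2 (j + rightSize t2 j) j :=
    IPrel_iff.mpr <|
      Or.inl ⟨by omega, (inSub_iff_le_add_rightSize t2 (by omega)).mpr ⟨hj1, le_rfl⟩⟩
  have := htr (k1 + 1 + (j + rightSize t2 j)) (k1 + 1 + j) (k1 + 1)
    (Or.inr (Or.inl ⟨by omega, by omega, by omega, by omega, by simpa using hdec⟩))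
    (Or.inr (Or.inr ⟨rfl, by omega, by omega, by omega⟩))
  rcases this with ⟨-, h, -⟩ | ⟨-, -, h, -⟩ | ⟨-, -, h, -⟩ <;> omega

lemma IsRightClosedPrefix.inSub_graft_of_lt {t2 : BinTree} {r : ℕ} (hr : IsRightClosedPrefix t2 r)
    (t1 : BinTree) {a b : ℕ} (hba : b < a) :
    inSub (graft t1 r t2) a b ↔
      (b = t1.size + 1 ∧ a ≤ t1.size + 1 + r) ∨ inSub t1 a b ∨
      (t1.size + 1 < b ∧ inSub t2 (a - (t1.size + 1)) (b - (t1.size + 1))) := by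
  rw [inSub_iff_le_add_rightSize _ hba, hr.rightSize_graft]
  split_ifs with hl hroot
  · simp [inSub_iff_le_add_rightSize t1 hba, hl.ne, hl.not_gt]
  · have := @inSub_bounds t1 a b
    grind
  · have := inSub_iff_le_add_rightSize t2 (a := a - (t1.size + 1)) (b := b - (t1.size + 1))
    have := @inSub_bounds t1 a b
    grind

lemma IsRightClosedPrefix.IPrel_graft_node {t1 t2 T1 T2 : BinTree} {r : ℕ}
    (hr : IsRightClosedPrefix t2 r) (hs1 : t1.size = T1.size) (hs2 : t2.size = T2.size) :
    IPrel (graft t1 r t2) (node T1 T2) = compRel T1.size T2.size (IPrel t1 T1) (IPrel t2 T2) r := by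
  funext a b
  apply propext
  set k := T1.size
  have hG := fun h : b < a => hr.inSub_graft_of_lt t1 h
  have hT : inSub (node T1 T2) a b ↔
      (b = k + 1 ∧ 1 ≤ a ∧ a ≤ k + T2.size + 1) ∨ inSub T1 a b ∨
      (k + 1 < a ∧ k + 1 < b ∧ inSub T2 (a - (k + 1)) (b - (k + 1))) := Iff.rfl
  have := @inSub_bounds t1 a b
  have := @inSub_bounds T1 a b
  have := @inSub_bounds t2 (a - (k + 1)) (b - (k + 1))
  have := @inSub_bounds T2 (a - (k + 1)) (b - (k + 1))
  have := hr.1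
  simp only [IPrel_iff, compRel]
  grind (splits := 25)

end BinTree

/-- Let `T = x(T1,T2)` be a binary tree. The set of interval-posets
`{IP[T',T] : T' ≤ T}` equals the union over all binary trees `T1' ≤ T1` and `T2' ≤ T2` of
the compositions `𝔹(IP[T1',T1], IP[T2',T2])`. -/
theorem initialIntervals_eq_union_comp (T1 T2 : BinTree) (I : ℕ → ℕ → Prop) :
    (∃ T' : BinTree, T'.size = (BinTree.node T1 T2).size ∧ TamariLE T' (BinTree.node T1 T2) ∧
        ∀ a b, I a b ↔ IPrel T' (BinTree.node T1 T2) a b) ↔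
      (∃ T1' T2' : BinTree, T1'.size = T1.size ∧ TamariLE T1' T1 ∧
        T2'.size = T2.size ∧ TamariLE T2' T2 ∧
        I ∈ Comp T1.size T2.size (IPrel T1' T1) (IPrel T2' T2)) := by
  constructor
  · rintro ⟨T', -, hle, hI⟩
    obtain ⟨t1, r, t2, h1, h2, hr, rfl⟩ := tamariLE_node_iff.mp hle
    have hIP := hr.IPrel_graft_node h1.size_eq h2.size_eq
    obtain rfl : I = _ := funext₂ fun a b => propext ((hI a b).trans (by rw [hIP]))
    refine ⟨t1, t2, h1.size_eq, h1, h2.size_eq, h2, compRel_mem_comp ?_⟩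
    exact hIP ▸ isIntervalPoset_IPrel hle
  · rintro ⟨t1, t2, hs1, h1, hs2, h2, hI⟩
    obtain ⟨r, hr, rfl⟩ := eq_compRel_of_mem_comp hI
    obtain ⟨⟨-, -, htr, -⟩, -⟩ := hI
    have hpre : IsRightClosedPrefix t2 r := .of_compRel_trans (hs2 ▸ hr) hs2.le htr
    refine ⟨graft t1 r t2, by simp only [size_graft, size, hs1, hs2],
      tamariLE_node_iff.mpr ⟨t1, r, t2, h1, h2, hpre, rfl⟩, fun a b => ?_⟩
    rw [hpre.IPrel_graft_node hs1 hs2]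
end

section
/- For n ≥ 0 let Φ_n(x) = Σ_I x^{trees(I)} ∈ ℤ[x], the sum running over all interval-posets I of size n. Then Φ_0 = 1 and, for every n ≥ 1, (x−1)·Φ_n(x) = Σ_{a+b = n−1, a,b ≥ 0} x·Φ_a(x)·(x·Φ_b(x) − Φ_b(1)), where Φ_b(1) denotes the evaluation of Φ_b at x = 1 (i.e. the number of interval-posets of size b). -/
open Polynomial

open BinTree

/-!
An interval-poset `I` of size `n ≥ 1` has a unique pivot `c`, the vertex lying above every
smaller vertex and below nothing. Removing it splits `I` into interval-posets `I₁` on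
`{1, …, c - 1}` and `I₂` on `{c + 1, …, n}` together with the number `m` of vertices
`c + 1, …, c + m` lying below `c`; conversely such a triple glues back to an interval-poset
exactly when `m = |I₂|` or `m + 1` is a tree root of `I₂`. The trees of the glued poset are those
of `I₁`, the tree of `c`, and the trees of `I₂` with root beyond `m`, so as `m` varies
`x ^ trees(I)` runs through `x ^ (trees(I₁) + 1) * x ^ k` for `0 ≤ k ≤ trees(I₂)`. Multiplying
this geometric sum by `x - 1` gives the functional equation.
-/

open scoped Classical

open Finset

noncomputable def treeRoots (n : ℕ) (I : ℕ → ℕ → Prop) : Finset ℕ :=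
  (Icc 1 n).filter fun k => ∀ j, j < k → ¬ I k j

lemma treeStat_eq_card_treeRoots (n : ℕ) (I : ℕ → ℕ → Prop) :
    treeStat n I = #(treeRoots n I) := by
  rw [treeStat, ← Set.ncard_coe_finset]
  congr 1
  ext k
  simp [treeRoots, and_assoc]

lemma isIntervalPoset_zero_iff {I : ℕ → ℕ → Prop} : IsIntervalPoset 0 I ↔ I = ⊥ := by
  constructor
  · intro h
    funext x y
    simpa using fun hxy => by have := h.1 x y hxy; omega
  · rintro rfl
    exact ⟨fun _ _ h => h.elim, fun _ h => h, fun _ _ _ h => h.elim,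
      fun _ _ _ _ _ h => h.elim, fun _ _ _ _ _ h => h.elim⟩

lemma treeStat_zero (I : ℕ → ℕ → Prop) : treeStat 0 I = 0 := by
  simp [treeStat_eq_card_treeRoots, treeRoots]

/-- The `m`-th element of the paper's composition `𝔹(I₁, I₂)`: besides the relations forced
by the definition of `Comp`, exactly the first `m` elements of the shifted copy of `I₂`
lie below the new vertex `a + 1`. -/
def compose (a : ℕ) (I₁ I₂ : ℕ → ℕ → Prop) (m : ℕ) : ℕ → ℕ → Prop := fun x y =>
  I₁ x y ∨ (a + 2 ≤ x ∧ a + 2 ≤ y ∧ I₂ (x - (a + 1)) (y - (a + 1))) ∨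
    (1 ≤ x ∧ x ≤ a ∧ y = a + 1) ∨ (a + 2 ≤ x ∧ x ≤ a + 1 + m ∧ y = a + 1)

/-- The admissible `m` in `compose _ _ I m`: `{1, …, m}` must be closed downwards in `I`, which
by the interval property means `m = b` or `m + 1` is a tree root. -/
noncomputable def cutPoints (b : ℕ) (I : ℕ → ℕ → Prop) : Finset ℕ :=
  insert b ((treeRoots b I).image (· - 1))

lemma mem_cutPoints {b m : ℕ} {I : ℕ → ℕ → Prop} :
    m ∈ cutPoints b I ↔ m = b ∨ m + 1 ∈ treeRoots b I := by
  simp only [cutPoints, mem_insert, mem_image]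
  constructor
  · rintro (h | ⟨r, hr, rfl⟩)
    · exact Or.inl h
    · have : 1 ≤ r := (mem_Icc.1 (mem_filter.1 hr).1).1
      exact Or.inr (by rwa [Nat.sub_add_cancel this])
  · rintro (h | h)
    · exact Or.inl h
    · exact Or.inr ⟨m + 1, h, rfl⟩

lemma le_of_mem_cutPoints {b m : ℕ} {I : ℕ → ℕ → Prop} (hm : m ∈ cutPoints b I) : m ≤ b := by
  rcases mem_cutPoints.1 hm with rfl | h
  · rfl
  · have := (mem_Icc.1 (mem_filter.1 h).1).2
    omega

lemma IsIntervalPoset.le_of_rel_of_mem_cutPoints {b m x y : ℕ} {I : ℕ → ℕ → Prop}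
    (h : IsIntervalPoset b I) (hm : m ∈ cutPoints b I) (hxy : I x y) (hy : y ≤ m) : x ≤ m := by
  rcases mem_cutPoints.1 hm with rfl | hroot
  · exact (h.1 x y hxy).2.1
  by_contra! hx
  have hroot := (mem_filter.1 hroot).2 y (by omega)
  rcases (Nat.succ_le_of_lt hx).eq_or_lt with rfl | hlt
  · exact hroot hxy
  · exact hroot (h.2.2.2.2 y (m + 1) x (by omega) hlt hxy)

lemma sum_card_filter_lt_insert_image_pred {M : Type*} [AddCommMonoid M] {R : Finset ℕ} {b : ℕ}
    (hR : ∀ r ∈ R, 1 ≤ r ∧ r ≤ b) (f : ℕ → M) :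
    ∑ m ∈ insert b (R.image (· - 1)), f #{r ∈ R | m < r} = ∑ k ∈ range (#R + 1), f k := by
  set S := insert b (R.image (· - 1))
  set g : ℕ → ℕ := fun m => #{r ∈ R | m < r}
  have mem_S : ∀ m ∈ S, m ≤ b ∧ (m = b ∨ m + 1 ∈ R) := by
    simp only [S, mem_insert, mem_image]
    rintro m (rfl | ⟨r, hr, rfl⟩)
    · exact ⟨le_rfl, Or.inl rfl⟩
    · have := hR r hr
      exact ⟨by omega, Or.inr (by rwa [Nat.sub_add_cancel this.1])⟩
  -- `m + 1 ∈ R` is counted by `g m` but not by `g m'`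
  have g_strictAnti : ∀ m ∈ S, ∀ m' ∈ S, m < m' → g m' < g m := by
    intro m hm m' hm' hlt
    have hm1 : m + 1 ∈ R := (mem_S m hm).2.resolve_left (by have := (mem_S m' hm').1; omega)
    refine card_lt_card ((ssubset_iff_of_subset fun r hr => ?_).2 ⟨m + 1, ?_, ?_⟩)
    · simp only [mem_filter] at hr ⊢
      exact ⟨hr.1, by omega⟩
    · simpa using hm1
    · simp only [mem_filter, not_and, not_lt]
      omega
  have g_injOn : Set.InjOn g S := by
    intro m hm m' hm' heq
    rcases lt_trichotomy m m' with h | h | h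
    · exact absurd heq (g_strictAnti m hm m' hm' h).ne'
    · exact h
    · exact absurd heq (g_strictAnti m' hm' m hm h).ne
  have card_S : #S = #R + 1 := by
    rw [card_insert_of_notMem, card_image_of_injOn]
    · intro r hr r' hr' h
      have := hR r hr; have := hR r' hr'; simp only at h; omega
    · simp only [mem_image, not_exists, not_and]
      intro r hr; have := hR r hr; omega
  have image_g : S.image g = range (#R + 1) := by
    refine eq_of_subset_of_card_le (fun k hk => ?_) ?_
    · obtain ⟨m, -, rfl⟩ := mem_image.1 hk
      exact mem_range.2 (Nat.lt_succ_of_le (card_filter_le _ _))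
    · rw [card_range, card_image_of_injOn g_injOn, card_S]
  rw [← image_g, sum_image g_injOn]

lemma sum_cutPoints {M : Type*} [AddCommMonoid M] (b : ℕ) (I : ℕ → ℕ → Prop) (f : ℕ → M) :
    ∑ m ∈ cutPoints b I, f #{r ∈ treeRoots b I | m < r} =
      ∑ k ∈ range (treeStat b I + 1), f k := by
  rw [treeStat_eq_card_treeRoots]
  exact sum_card_filter_lt_insert_image_pred
    (fun r hr => mem_Icc.1 (mem_filter.1 hr).1) f

section compose

variable {a b m x y : ℕ} {I₁ I₂ : ℕ → ℕ → Prop}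

lemma isIntervalPoset_compose (h₁ : IsIntervalPoset a I₁) (h₂ : IsIntervalPoset b I₂)
    (hm : m ∈ cutPoints b I₂) : IsIntervalPoset (a + b + 1) (compose a I₁ I₂ m) := by
  have hmb := le_of_mem_cutPoints hm
  obtain ⟨bd₁, irrefl₁, trans₁, left₁, right₁⟩ := h₁
  obtain ⟨bd₂, irrefl₂, trans₂, left₂, right₂⟩ := id h₂
  refine ⟨?_, ?_, ?_, ?_, ?_⟩
  · rintro x y (h | ⟨hx, hy, h⟩ | ⟨hx, hx', hy⟩ | ⟨hx, hx', hy⟩)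
    · have := bd₁ x y h; omega
    · have := bd₂ _ _ h; omega
    · omega
    · omega
  · rintro x (h | ⟨-, -, h⟩ | h | h)
    · exact irrefl₁ x h
    · exact irrefl₂ _ h
    · omega
    · omega
  · rintro x y z (h | ⟨hx, hy, h⟩ | ⟨hx, hx', rfl⟩ | ⟨hx, hx', rfl⟩) hyz <;>
      rcases hyz with h' | ⟨hy', hz, h'⟩ | ⟨hy', hy'', hz⟩ | ⟨hy', hy'', hz⟩
    · exact Or.inl (trans₁ x y z h h')
    · have := bd₁ x y h; omega
    · have := bd₁ x y h
      exact Or.inr (Or.inr (Or.inl ⟨this.1, by omega, hz⟩))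
    · have := bd₁ x y h; omega
    · have := bd₁ y z h'; omega
    · exact Or.inr (Or.inl ⟨hx, hz, trans₂ _ _ _ h h'⟩)
    · omega
    · have := h₂.le_of_rel_of_mem_cutPoints hm h (by omega)
      exact Or.inr (Or.inr (Or.inr ⟨hx, by omega, hz⟩))
    all_goals first | omega | (have := bd₁ _ _ h'; omega)
  · rintro x y z hxy hyz (h | ⟨hx, hz, h⟩ | ⟨hx, -, hz⟩ | ⟨hx, -, hz⟩)
    · exact Or.inl (left₁ x y z hxy hyz h)
    · exact Or.inr (Or.inl ⟨by omega, hz, left₂ _ (y - (a + 1)) _ (by omega) (by omega) h⟩)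
    · exact Or.inr (Or.inr (Or.inl ⟨by omega, by omega, hz⟩))
    · omega
  · rintro x y z hxy hyz (h | ⟨hz, hx, h⟩ | ⟨-, hz, hx⟩ | ⟨hz, hz', hx⟩)
    · exact Or.inl (right₁ x y z hxy hyz h)
    · exact Or.inr (Or.inl ⟨by omega, by omega, right₂ _ (y - (a + 1)) _ (by omega) (by omega) h⟩)
    · omega
    · exact Or.inr (Or.inr (Or.inr ⟨by omega, by omega, hx⟩))

lemma compose_iff_of_le (hy : y ≤ a) : compose a I₁ I₂ m x y ↔ I₁ x y := by
  refine ⟨?_, Or.inl⟩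
  rintro (h | ⟨-, hy', -⟩ | ⟨-, -, rfl⟩ | ⟨-, -, rfl⟩)
  · exact h
  all_goals omega

lemma compose_iff_of_lt (h₁ : IsIntervalPoset a I₁) (hy : a + 1 < y) :
    compose a I₁ I₂ m x y ↔ a + 1 < x ∧ I₂ (x - (a + 1)) (y - (a + 1)) := by
  constructor
  · rintro (h | ⟨hx, -, h⟩ | ⟨-, -, rfl⟩ | ⟨-, -, rfl⟩)
    · have := h₁.1 _ _ h; omega
    · exact ⟨hx, h⟩
    · omega
    · omega
  · rintro ⟨hx, h⟩
    exact Or.inr (Or.inl ⟨hx, hy, h⟩)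

lemma compose_succ_iff (h₁ : IsIntervalPoset a I₁) :
    compose a I₁ I₂ m x (a + 1) ↔ (1 ≤ x ∧ x ≤ a) ∨ (a + 1 < x ∧ x ≤ a + 1 + m) := by
  constructor
  · rintro (h | ⟨-, hy, -⟩ | ⟨hx, hx', -⟩ | ⟨hx, hx', -⟩)
    · have := h₁.1 _ _ h; omega
    · omega
    · exact Or.inl ⟨hx, hx'⟩
    · exact Or.inr ⟨hx, hx'⟩
  · rintro (⟨hx, hx'⟩ | ⟨hx, hx'⟩)
    · exact Or.inr (Or.inr (Or.inl ⟨hx, hx', rfl⟩))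
    · exact Or.inr (Or.inr (Or.inr ⟨hx, hx', rfl⟩))

lemma treeRoots_compose (h₁ : IsIntervalPoset a I₁) (h₂ : IsIntervalPoset b I₂) :
    treeRoots (a + b + 1) (compose a I₁ I₂ m) =
      (treeRoots a I₁ ∪ {a + 1}) ∪ {r ∈ treeRoots b I₂ | m < r}.image (· + (a + 1)) := by
  ext k
  simp only [treeRoots, mem_union, mem_filter, mem_Icc, mem_image, mem_singleton]
  constructor
  · rintro ⟨⟨hk, hk'⟩, hroot⟩
    rcases lt_trichotomy k (a + 1) with h | rfl | h
    · exact Or.inl (Or.inl ⟨⟨hk, by omega⟩, fun j hj h₁j => hroot j hj (Or.inl h₁j)⟩)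
    · exact Or.inl (Or.inr rfl)
    · refine Or.inr ⟨k - (a + 1), ⟨⟨⟨by omega, by omega⟩, fun j hj h₂j => ?_⟩, ?_⟩, by omega⟩
      · have := h₂.1 _ _ h₂j
        refine hroot (j + (a + 1)) (by omega) (Or.inr (Or.inl ⟨by omega, by omega, ?_⟩))
        rwa [Nat.add_sub_cancel]
      · by_contra! hkm
        exact hroot (a + 1) h (Or.inr (Or.inr (Or.inr ⟨h, by omega, rfl⟩)))
  · rintro ((⟨⟨hk, hk'⟩, hroot⟩ | rfl) | ⟨r, ⟨⟨⟨hr, hr'⟩, hroot⟩, hmr⟩, rfl⟩)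
    · refine ⟨⟨hk, by omega⟩, ?_⟩
      rintro j hj (h | ⟨-, hj', -⟩ | ⟨-, -, rfl⟩ | ⟨-, -, rfl⟩)
      · exact hroot j hj h
      all_goals omega
    · refine ⟨⟨by omega, by omega⟩, ?_⟩
      rintro j - (h | ⟨hx, -, -⟩ | ⟨-, hx, -⟩ | ⟨hx, -, -⟩)
      · have := h₁.1 _ _ h; omega
      all_goals omega
    · refine ⟨⟨by omega, by omega⟩, ?_⟩
      rintro j hj (h | ⟨-, hj', h⟩ | ⟨-, hx, rfl⟩ | ⟨-, hx, rfl⟩)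
      · have := h₁.1 _ _ h; omega
      · rw [Nat.add_sub_cancel] at h
        exact hroot (j - (a + 1)) (by omega) h
      all_goals omega

lemma treeStat_compose (h₁ : IsIntervalPoset a I₁) (h₂ : IsIntervalPoset b I₂) :
    treeStat (a + b + 1) (compose a I₁ I₂ m) =
      treeStat a I₁ + 1 + #{r ∈ treeRoots b I₂ | m < r} := by
  have le_a : ∀ k ∈ treeRoots a I₁, k ≤ a := fun k hk => (mem_Icc.1 (mem_filter.1 hk).1).2
  have disj₁ : Disjoint (treeRoots a I₁) {a + 1} :=
    disjoint_singleton_right.2 fun h => by have := le_a _ h; omega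
  have disj₂ : Disjoint (treeRoots a I₁ ∪ {a + 1})
      ({r ∈ treeRoots b I₂ | m < r}.image (· + (a + 1))) := by
    refine disjoint_right.2 fun k hk hk' => ?_
    obtain ⟨r, hr, rfl⟩ := mem_image.1 hk
    have : 1 ≤ r := (mem_Icc.1 (mem_filter.1 (mem_filter.1 hr).1).1).1
    rcases mem_union.1 hk' with h | h
    · have := le_a _ h; omega
    · rw [mem_singleton] at h; omega
  rw [treeStat_eq_card_treeRoots, treeStat_eq_card_treeRoots, treeRoots_compose h₁ h₂,
    card_union_of_disjoint disj₂, card_union_of_disjoint disj₁,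
    card_image_of_injective _ (add_left_injective (a + 1)), card_singleton]

end compose

/-- The vertex `k₁ + 1` of the composition `𝔹(I₁, I₂)`. -/
def IsPivot (I : ℕ → ℕ → Prop) (c : ℕ) : Prop :=
  1 ≤ c ∧ (∀ i, 1 ≤ i → i < c → I i c) ∧ ∀ j, ¬ I c j

lemma IsPivot.eq {I : ℕ → ℕ → Prop} {c c' : ℕ} (h : IsPivot I c) (h' : IsPivot I c') :
    c = c' := by
  rcases lt_trichotomy c c' with hlt | heq | hgt
  · exact (h.2.2 c' (h'.2.1 c h.1 hlt)).elim
  · exact heq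
  · exact (h'.2.2 c (h.2.1 c' h'.1 hgt)).elim

lemma isPivot_compose {a m : ℕ} {I₁ I₂ : ℕ → ℕ → Prop} (h₁ : IsIntervalPoset a I₁) :
    IsPivot (compose a I₁ I₂ m) (a + 1) := by
  refine ⟨by omega, fun i hi hia => Or.inr (Or.inr (Or.inl ⟨hi, by omega, rfl⟩)), ?_⟩
  rintro j (h | ⟨hx, -, -⟩ | ⟨-, hx, -⟩ | ⟨hx, -, -⟩)
  · have := h₁.1 _ _ h; omega
  all_goals omega

noncomputable def pivot (n : ℕ) (I : ℕ → ℕ → Prop) : ℕ :=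
  sSup {c | c ≤ n ∧ ∀ i, 1 ≤ i → i < c → I i c}

lemma pivot_le (n : ℕ) (I : ℕ → ℕ → Prop) : pivot n I ≤ n := csSup_le' fun _ hc => hc.1

lemma IsIntervalPoset.isPivot_pivot {n : ℕ} {I : ℕ → ℕ → Prop} (h : IsIntervalPoset n I)
    (hn : 1 ≤ n) : IsPivot I (pivot n I) := by
  obtain ⟨bd, irrefl, trans, left, -⟩ := h
  set S := {c | c ≤ n ∧ ∀ i, 1 ≤ i → i < c → I i c}
  have bdd : BddAbove S := ⟨n, fun c hc => hc.1⟩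
  have one_mem : 1 ∈ S := ⟨hn, fun i hi hi' => by omega⟩
  have below : ∀ i, 1 ≤ i → i < pivot n I → I i (pivot n I) := (Nat.sSup_mem ⟨1, one_mem⟩ bdd).2
  refine ⟨le_csSup bdd one_mem, below, fun j hj => ?_⟩
  have := bd _ _ hj
  rcases lt_or_gt_of_ne (fun h : j = pivot n I => irrefl _ (h ▸ hj)) with hlt | hgt
  · exact irrefl _ (trans _ _ _ hj (below j this.2.2.1 hlt))
  · -- otherwise `j` would be a larger element of `S`
    refine hgt.not_ge (le_csSup bdd ⟨this.2.2.2, fun i hi hij => ?_⟩)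
    rcases lt_trichotomy i (pivot n I) with hi' | rfl | hi'
    · exact trans _ _ _ (below i hi hi') hj
    · exact hj
    · exact left _ _ _ hi' hij hj

lemma pivot_compose {a b m : ℕ} {I₁ I₂ : ℕ → ℕ → Prop} (h₁ : IsIntervalPoset a I₁)
    (h₂ : IsIntervalPoset b I₂) (hm : m ∈ cutPoints b I₂) :
    pivot (a + b + 1) (compose a I₁ I₂ m) = a + 1 :=
  ((isIntervalPoset_compose h₁ h₂ hm).isPivot_pivot (by omega)).eq (isPivot_compose h₁)

def leftPart (a : ℕ) (I : ℕ → ℕ → Prop) : ℕ → ℕ → Prop := fun x y => x ≤ a ∧ y ≤ a ∧ I x y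

def rightPart (c b : ℕ) (I : ℕ → ℕ → Prop) : ℕ → ℕ → Prop := fun x y =>
  1 ≤ x ∧ x ≤ b ∧ 1 ≤ y ∧ y ≤ b ∧ I (c + x) (c + y)

/-- The `m` for which `I = compose (c - 1) _ _ m`, i.e. the number of `c + i` below `c`. -/
noncomputable def pivotReach (c b : ℕ) (I : ℕ → ℕ → Prop) : ℕ :=
  sSup {j | j ≤ b ∧ ∀ i, 1 ≤ i → i ≤ j → I (c + i) c}

section decompose

variable {n a b c m : ℕ} {I I₁ I₂ : ℕ → ℕ → Prop}

lemma isIntervalPoset_leftPart (h : IsIntervalPoset n I) :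
    IsIntervalPoset a (leftPart a I) := by
  obtain ⟨bd, irrefl, trans, left, right⟩ := h
  refine ⟨?_, ?_, ?_, ?_, ?_⟩
  · rintro x y ⟨hx, hy, hxy⟩
    have := bd _ _ hxy
    exact ⟨this.1, hx, this.2.2.1, hy⟩
  · rintro x ⟨-, -, hxx⟩
    exact irrefl x hxx
  · rintro x y z ⟨hx, -, hxy⟩ ⟨-, hz, hyz⟩
    exact ⟨hx, hz, trans _ _ _ hxy hyz⟩
  · rintro x y z hxy hyz ⟨-, hz, hxz⟩
    exact ⟨by omega, hz, left _ _ _ hxy hyz hxz⟩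
  · rintro x y z hxy hyz ⟨hz, hx, hzx⟩
    exact ⟨by omega, hx, right _ _ _ hxy hyz hzx⟩

lemma isIntervalPoset_rightPart (h : IsIntervalPoset n I) :
    IsIntervalPoset b (rightPart c b I) := by
  obtain ⟨-, irrefl, trans, left, right⟩ := h
  refine ⟨?_, ?_, ?_, ?_, ?_⟩
  · rintro x y ⟨hx, hx', hy, hy', -⟩
    exact ⟨hx, hx', hy, hy'⟩
  · rintro x ⟨-, -, -, -, hxx⟩
    exact irrefl _ hxx
  · rintro x y z ⟨hx, hx', -, -, hxy⟩ ⟨-, -, hz, hz', hyz⟩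
    exact ⟨hx, hx', hz, hz', trans _ _ _ hxy hyz⟩
  · rintro x y z hxy hyz ⟨hx, -, hz, hz', hxz⟩
    exact ⟨by omega, by omega, hz, hz', left _ _ _ (by omega) (by omega) hxz⟩
  · rintro x y z hxy hyz ⟨hz, hz', hx, hx', hzx⟩
    exact ⟨by omega, by omega, hx, hx', right _ _ _ (by omega) (by omega) hzx⟩

lemma IsIntervalPoset.pivotReach_spec (h : IsIntervalPoset n I) :
    pivotReach c (n - c) I ≤ n - c ∧
      (∀ i, 1 ≤ i → i ≤ pivotReach c (n - c) I → I (c + i) c) ∧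
      ∀ j, pivotReach c (n - c) I < j → ¬ I (c + j) c := by
  set S := {j | j ≤ n - c ∧ ∀ i, 1 ≤ i → i ≤ j → I (c + i) c}
  have bdd : BddAbove S := ⟨n - c, fun j hj => hj.1⟩
  obtain ⟨le_b, below⟩ : pivotReach c (n - c) I ∈ S :=
    Nat.sSup_mem ⟨0, Nat.zero_le _, fun i hi hi' => by omega⟩ bdd
  refine ⟨le_b, below, fun j hj hrel => hj.not_ge (le_csSup bdd ⟨?_, fun i hi hij => ?_⟩)⟩
  · have := (h.1 _ _ hrel).2.1
    omega
  · rcases hij.eq_or_lt with rfl | hij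
    · exact hrel
    · exact h.2.2.2.2 c (c + i) (c + j) (by omega) (by omega) hrel

lemma IsIntervalPoset.pivotReach_mem_cutPoints (h : IsIntervalPoset n I) :
    pivotReach c (n - c) I ∈ cutPoints (n - c) (rightPart c (n - c) I) := by
  obtain ⟨le_b, below, not_below⟩ := h.pivotReach_spec (c := c)
  refine mem_cutPoints.2 (le_b.eq_or_lt.imp id fun hlt => ?_)
  refine mem_filter.2 ⟨mem_Icc.2 ⟨by omega, hlt⟩, fun j hj hj' => ?_⟩
  obtain ⟨-, -, hj₁, -, hrel⟩ := hj'
  exact not_below _ (Nat.lt_succ_self _) (h.2.2.1 _ _ _ hrel (below j hj₁ (by omega)))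

lemma IsIntervalPoset.compose_parts (h : IsIntervalPoset n I) (hc : IsPivot I c)
    (hcn : c ≤ n) :
    compose (c - 1) (leftPart (c - 1) I) (rightPart c (n - c) I) (pivotReach c (n - c) I) = I := by
  obtain ⟨hc₁, below_c, not_above_c⟩ := hc
  obtain ⟨-, below, not_below⟩ := h.pivotReach_spec (c := c)
  obtain ⟨bd, irrefl, -, left, right⟩ := h
  funext x y
  apply propext
  constructor
  · rintro (⟨-, -, hxy⟩ | ⟨hx, hy, -, -, -, -, hxy⟩ | ⟨hx, hx', rfl⟩ | ⟨hx, hx', rfl⟩)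
    · exact hxy
    · rwa [show c + (x - (c - 1 + 1)) = x by omega, show c + (y - (c - 1 + 1)) = y by omega]
        at hxy
    · rw [Nat.sub_add_cancel hc₁]
      exact below_c x hx (by omega)
    · rw [Nat.sub_add_cancel hc₁]
      simpa [show c + (x - c) = x by omega] using below (x - c) (by omega) (by omega)
  · intro hxy
    have := bd _ _ hxy
    rcases lt_trichotomy y c with hyc | rfl | hyc
    · -- `y < c < x` is excluded by convexity, since nothing lies above the pivot
      rcases lt_trichotomy x c with hxc | rfl | hxc
      · exact Or.inl ⟨by omega, by omega, hxy⟩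
      · exact (not_above_c y hxy).elim
      · exact (not_above_c y (right y c x hyc hxc hxy)).elim
    · rcases lt_trichotomy x y with hxc | rfl | hxc
      · exact Or.inr (Or.inr (Or.inl ⟨this.1, by omega, by omega⟩))
      · exact (irrefl _ hxy).elim
      · refine Or.inr (Or.inr (Or.inr ⟨by omega, ?_, by omega⟩))
        by_contra! hx
        exact not_below (x - y) (by omega) (by rwa [show y + (x - y) = x by omega])
    · rcases lt_trichotomy x c with hxc | rfl | hxc
      · exact (not_above_c y (left x c y hxc hyc hxy)).elim
      · exact (not_above_c y hxy).elim
      · refine Or.inr (Or.inl ⟨by omega, by omega, by omega, by omega, by omega, by omega, ?_⟩)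
        rwa [show c + (x - (c - 1 + 1)) = x by omega, show c + (y - (c - 1 + 1)) = y by omega]

lemma leftPart_compose (h₁ : IsIntervalPoset a I₁) : leftPart a (compose a I₁ I₂ m) = I₁ := by
  funext x y
  apply propext
  constructor
  · rintro ⟨-, hy, hxy⟩
    exact (compose_iff_of_le hy).1 hxy
  · intro hxy
    have := h₁.1 _ _ hxy
    exact ⟨this.2.1, this.2.2.2, Or.inl hxy⟩

lemma rightPart_compose (h₁ : IsIntervalPoset a I₁) (h₂ : IsIntervalPoset b I₂) :
    rightPart (a + 1) b (compose a I₁ I₂ m) = I₂ := by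
  funext x y
  apply propext
  constructor
  · rintro ⟨hx, -, hy, -, hxy⟩
    simpa using ((compose_iff_of_lt h₁ (by omega)).1 hxy).2
  · intro hxy
    have := h₂.1 _ _ hxy
    refine ⟨this.1, this.2.1, this.2.2.1, this.2.2.2, ?_⟩
    exact (compose_iff_of_lt h₁ (by omega)).2 ⟨by omega, by simpa using hxy⟩

lemma pivotReach_compose (h₁ : IsIntervalPoset a I₁) (hmb : m ≤ b) :
    pivotReach (a + 1) b (compose a I₁ I₂ m) = m := by
  have below_iff : ∀ i, 1 ≤ i → (compose a I₁ I₂ m (a + 1 + i) (a + 1) ↔ i ≤ m) := by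
    intro i hi
    rw [compose_succ_iff h₁]
    omega
  have : {j | j ≤ b ∧ ∀ i, 1 ≤ i → i ≤ j → compose a I₁ I₂ m (a + 1 + i) (a + 1)} =
      Set.Iic m := by
    refine Set.ext fun j => ⟨?_, ?_⟩
    · rintro ⟨-, hj⟩
      rcases Nat.eq_zero_or_pos j with rfl | hj₀
      · exact Nat.zero_le m
      · exact (below_iff j hj₀).1 (hj j hj₀ le_rfl)
    · exact fun (hjm : j ≤ m) => ⟨by omega, fun i hi hij => (below_iff i hi).2 (by omega)⟩
  rw [pivotReach, this, csSup_Iic]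

end decompose

theorem sum_isIntervalPoset_succ {M : Type*} [AddCommMonoid M] {s : ℕ → Finset (ℕ → ℕ → Prop)}
    (hs : ∀ n I, I ∈ s n ↔ IsIntervalPoset n I) (N : ℕ) (f : (ℕ → ℕ → Prop) → M) :
    ∑ I ∈ s (N + 1), f I =
      ∑ q ∈ antidiagonal N, ∑ I₁ ∈ s q.1, ∑ I₂ ∈ s q.2, ∑ m ∈ cutPoints q.2 I₂,
        f (compose q.1 I₁ I₂ m) := by
  set D := (antidiagonal N).sigma fun q => (s q.1 ×ˢ s q.2).sigma fun p => cutPoints q.2 p.2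
  have mem_D : ∀ t ∈ D, t.1.1 + t.1.2 = N ∧ IsIntervalPoset t.1.1 t.2.1.1 ∧
      IsIntervalPoset t.1.2 t.2.1.2 ∧ t.2.2 ∈ cutPoints t.1.2 t.2.1.2 := by
    rintro ⟨⟨a, b⟩, ⟨I₁, I₂⟩, m⟩ ht
    simp only [D, mem_sigma, mem_product, HasAntidiagonal.mem_antidiagonal, hs] at ht
    exact ⟨ht.1, ht.2.1.1, ht.2.1.2, ht.2.2⟩
  have : ∑ I ∈ s (N + 1), f I = ∑ t ∈ D, f (compose t.1.1 t.2.1.1 t.2.1.2 t.2.2) := by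
    refine (sum_bij' (fun t _ => compose t.1.1 t.2.1.1 t.2.1.2 t.2.2)
      (fun I _ => ⟨(pivot (N + 1) I - 1, N + 1 - pivot (N + 1) I),
        (leftPart (pivot (N + 1) I - 1) I, rightPart (pivot (N + 1) I) (N + 1 - pivot (N + 1) I) I),
        pivotReach (pivot (N + 1) I) (N + 1 - pivot (N + 1) I) I⟩) ?_ ?_ ?_ ?_ ?_).symm
    · rintro ⟨⟨a, b⟩, ⟨I₁, I₂⟩, m⟩ ht
      obtain ⟨rfl, h₁, h₂, hm⟩ := mem_D _ ht
      exact (hs _ _).2 (isIntervalPoset_compose h₁ h₂ hm)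
    · intro I hI
      have h := (hs _ _).1 hI
      have := (h.isPivot_pivot (Nat.le_add_left 1 N)).1
      simp only [D, mem_sigma, mem_product, HasAntidiagonal.mem_antidiagonal, hs]
      exact ⟨by have := pivot_le (N + 1) I; omega, ⟨isIntervalPoset_leftPart h, isIntervalPoset_rightPart h⟩,
        h.pivotReach_mem_cutPoints⟩
    · rintro ⟨⟨a, b⟩, ⟨I₁, I₂⟩, m⟩ ht
      obtain ⟨rfl, h₁, h₂, hm⟩ := mem_D _ ht
      simp only [pivot_compose h₁ h₂ hm, Nat.add_sub_cancel,
        show a + b + 1 - (a + 1) = b by omega, leftPart_compose h₁, rightPart_compose h₁ h₂,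
        pivotReach_compose h₁ (le_of_mem_cutPoints hm)]
    · intro I hI
      have h := (hs _ _).1 hI
      exact h.compose_parts (h.isPivot_pivot (Nat.le_add_left 1 N)) (pivot_le _ _)
    · intro t _
      rfl
  rw [this, sum_sigma]
  refine sum_congr rfl fun q _ => ?_
  rw [sum_sigma, sum_product]

lemma X_sub_one_mul_sum_cutPoints {a b : ℕ} {I₁ I₂ : ℕ → ℕ → Prop}
    (h₁ : IsIntervalPoset a I₁) (h₂ : IsIntervalPoset b I₂) :
    (X - 1 : ℤ[X]) * ∑ m ∈ cutPoints b I₂, X ^ treeStat (a + b + 1) (compose a I₁ I₂ m) =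
      X * X ^ treeStat a I₁ * (X * X ^ treeStat b I₂ - 1) := by
  simp_rw [treeStat_compose h₁ h₂, pow_add _ (treeStat a I₁ + 1), ← mul_sum]
  rw [sum_cutPoints, mul_left_comm, mul_geom_sum]
  ring

lemma X_mul_sum_mul_sub_eval_one {ι κ : Type*} (S : Finset ι) (T : Finset κ) (t : ι → ℕ)
    (u : κ → ℕ) :
    X * (∑ i ∈ S, X ^ t i) * (X * ∑ j ∈ T, X ^ u j - C ((∑ j ∈ T, X ^ u j : ℤ[X]).eval 1)) =
      ∑ i ∈ S, ∑ j ∈ T, X * X ^ t i * (X * X ^ u j - 1) := by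
  have eval_one : (∑ j ∈ T, X ^ u j : ℤ[X]).eval 1 = #T := by simp [eval_finsetSum]
  rw [eval_one, mul_sum, sum_mul]
  refine sum_congr rfl fun i _ => ?_
  rw [← mul_sum, sum_sub_distrib, mul_sum, sum_const, nsmul_one]
  simp

/-- For `n ≥ 0` let `Φ_n(x) = Σ_I x^{trees(I)}`, the sum running over all
interval-posets `I` of size `n`. Then `Φ_0 = 1` and for every `n ≥ 1`,
`(x−1)·Φ_n(x) = Σ_{a+b=n−1} x·Φ_a(x)·(x·Φ_b(x) − Φ_b(1))`. -/
theorem phi_functional_equation (s : ℕ → Finset (ℕ → ℕ → Prop))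
    (hs : ∀ n (I : ℕ → ℕ → Prop), I ∈ s n ↔ IsIntervalPoset n I)
    (Φ : ℕ → Polynomial ℤ)
    (hΦ : ∀ n, Φ n = ∑ I ∈ s n, (Polynomial.X : Polynomial ℤ) ^ treeStat n I) :
    Φ 0 = 1 ∧
    ∀ n, 1 ≤ n →
      (Polynomial.X - 1) * Φ n =
        ∑ q ∈ Finset.HasAntidiagonal.antidiagonal (n - 1),
          Polynomial.X * Φ q.1 *
            (Polynomial.X * Φ q.2 - Polynomial.C ((Φ q.2).eval 1)) := by
  refine ⟨?_, fun n hn => ?_⟩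
  · have : s 0 = {⊥} := by
      ext I
      rw [hs, mem_singleton, isIntervalPoset_zero_iff]
    rw [hΦ, this, sum_singleton, treeStat_zero, pow_zero]
  obtain ⟨N, rfl⟩ : ∃ N, n = N + 1 := ⟨n - 1, by omega⟩
  rw [Nat.add_sub_cancel, hΦ, sum_isIntervalPoset_succ hs, mul_sum]
  refine sum_congr rfl fun q hq => ?_
  rw [hΦ q.1, hΦ q.2, X_mul_sum_mul_sub_eval_one, mul_sum]
  refine sum_congr rfl fun I₁ h₁ => ?_
  rw [mul_sum]
  refine sum_congr rfl fun I₂ h₂ => ?_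
  rw [← HasAntidiagonal.mem_antidiagonal.1 hq]
  exact X_sub_one_mul_sum_cutPoints ((hs _ _).1 h₁) ((hs _ _).1 h₂)
end

section
/- For every binary tree T of size n, the number of connected components of the decreasing forest dec(T) (equivalently, the number of k ∈ {1,…,n} with no j < k such that k ≺_{dec(T)} j) equals the number of nodes on the left border of T. -/
open Polynomial

open BinTree

theorem inSub_bounds : ∀ (T : BinTree) a b, inSub T a b →
    1 ≤ a ∧ a ≤ T.size ∧ 1 ≤ b ∧ b ≤ T.size := by
  intro T
  induction T with
  | leaf => intro a b h; exact h.elim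
  | node l r ihl ihr =>
    intro a b h
    simp only [inSub] at h
    rcases h with ⟨hb, h1, h2⟩ | h | ⟨ha, hb, h⟩
    · simp only [size]; omega
    · have := ihl a b h; simp only [size]; omega
    · have := ihr _ _ h; simp only [size] at *; omega

/-- For every binary tree `T` of size `n`, the number of connected components
of the decreasing forest `dec(T)` (the number of `k ∈ {1,…,n}` with no `j < k` such that
`k ≺_{dec(T)} j`) equals the number of nodes on the left border of `T`. -/
theorem decForest_components_eq_leftBorder (T : BinTree) :
    treeStat T.size (decRel T) = T.leftBorder := by
  induction T with
  | leaf =>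
    have : {k : ℕ | 1 ≤ k ∧ k ≤ BinTree.leaf.size ∧
        ∀ j, j < k → ¬ decRel BinTree.leaf k j} = ∅ := by
      ext k; simp [size]; omega
    simp [treeStat, this, leftBorder]
  | node l r ihl ihr =>
    have hset : {k : ℕ | 1 ≤ k ∧ k ≤ (node l r).size ∧ ∀ j, j < k → ¬ decRel (node l r) k j}
        = insert (l.size + 1) {k : ℕ | 1 ≤ k ∧ k ≤ l.size ∧ ∀ j, j < k → ¬ decRel l k j} := by
      ext k
      simp only [Set.mem_insert_iff, Set.mem_setOf_eq]
      constructor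
      · rintro ⟨h1, h2, h3⟩
        by_cases hk : k = l.size + 1
        · left; exact hk
        right
        have hkl : k ≤ l.size := by
          by_contra hkl
          exact h3 (l.size + 1) (by omega)
            ⟨by omega, hk, Or.inl ⟨rfl, h1, by simp only [size] at h2; omega⟩⟩
        refine ⟨h1, hkl, fun j hj hrel => ?_⟩
        exact h3 j hj ⟨hrel.1, hrel.2.1, Or.inr (Or.inl hrel.2.2)⟩
      · rintro (rfl | ⟨h1, h2, h3⟩)
        · refine ⟨by omega, by simp only [size]; omega, fun j hj hrel => ?_⟩
          rcases hrel.2.2 with ⟨hb, _⟩ | h | ⟨ha, _⟩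
          · have := hrel.1; omega
          · have := inSub_bounds l _ _ h; omega
          · omega
        · refine ⟨h1, by simp only [size]; omega, fun j hj hrel => ?_⟩
          rcases hrel.2.2 with ⟨hb, _⟩ | h | ⟨ha, _⟩
          · omega
          · exact h3 j hj ⟨hrel.1, hrel.2.1, h⟩
          · omega
    have hfin : {k : ℕ | 1 ≤ k ∧ k ≤ l.size ∧ ∀ j, j < k → ¬ decRel l k j}.Finite :=
      Set.Finite.subset (Set.finite_Icc 1 l.size) (fun k hk => ⟨hk.1, hk.2.1⟩)
    have hnot : l.size + 1 ∉ {k : ℕ | 1 ≤ k ∧ k ≤ l.size ∧ ∀ j, j < k → ¬ decRel l k j} :=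
      fun h => by have := h.2.1; omega
    rw [treeStat, hset, Set.ncard_insert_of_notMem hnot hfin]
    have : Set.ncard {k : ℕ | 1 ≤ k ∧ k ≤ l.size ∧ ∀ j, j < k → ¬ decRel l k j}
        = treeStat l.size (decRel l) := rfl
    rw [this, ihl, leftBorder]
end

section
/- Let T be a binary tree of size n. Then ExtL(T) ⊆ ExtL(inc(T)), and there exists σ ∈ ExtL(T) such that every μ ∈ ExtL(inc(T)) satisfies coinv(μ) ⊆ coinv(σ) (i.e. the weak-order-maximal linear extension of inc(T) is a linear extension of T). Symmetrically, ExtL(T) ⊆ ExtL(dec(T)) and there exists τ ∈ ExtL(T) such that every μ ∈ ExtL(dec(T)) satisfies coinv(τ) ⊆ coinv(μ). -/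
open Polynomial

open BinTree

/-! Both extremal linear extensions are postorder readings of the binary search tree. Listing
the right subtree before the left one at every node gives a word in which any two letters
`a < b` with `a` first satisfy `a ≺_T b`: every non-coinversion is a relation of `inc(T)`, so
every linear extension of `inc(T)` has at most its coinversions. Listing the left subtree first
gives a word each of whose coinversions is a relation of `dec(T)`, so every linear extension
of `dec(T)` has at least its coinversions. -/

theorem List.Pairwise.exists_perm_of_perm_range' {n : ℕ} {w : List ℕ} {R : ℕ → ℕ → Prop}
    (hR : w.Pairwise R) (hw : w.Perm (List.range' 1 n)) :
    ∃ σ : Equiv.Perm (Fin n), ∀ i j, i < j → R ((σ i : ℕ) + 1) ((σ j : ℕ) + 1) := by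
  have hlen : w.length = n := by simpa using hw.length_eq
  have hbound (i : Fin n) : 1 ≤ w[i.1] ∧ w[i.1] < 1 + n :=
    List.mem_range'_1.1 (hw.subset (List.getElem_mem _))
  let f (i : Fin n) : Fin n := ⟨w[i.1] - 1, by have := hbound i; omega⟩
  have hf (i : Fin n) : (f i : ℕ) + 1 = w[i.1] := Nat.sub_add_cancel (hbound i).1
  have hinj : Function.Injective f := fun i j hij => by
    have hij : w[i.1] = w[j.1] := by rw [← hf, ← hf, hij]
    exact Fin.ext ((hw.nodup_iff.2 List.nodup_range').getElem_inj_iff.1 hij)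
  refine ⟨Equiv.ofBijective f (Finite.injective_iff_bijective.1 hinj), fun i j hij => ?_⟩
  simp only [Equiv.ofBijective_apply, hf]
  exact List.pairwise_iff_getElem.1 hR i j _ _ hij

theorem IsLinExt.mono {n : ℕ} {rel rel' : ℕ → ℕ → Prop} {σ : Equiv.Perm (Fin n)}
    (hσ : IsLinExt n rel σ) (h : ∀ a b, rel' a b → rel a b) : IsLinExt n rel' σ :=
  fun i j hij => hσ i j (h _ _ hij)

theorem isLinExt_of_forall_lt_not_rel {n : ℕ} {rel : ℕ → ℕ → Prop}
    {σ : Equiv.Perm (Fin n)} (hirr : ∀ a, ¬ rel a a)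
    (hσ : ∀ i j, i < j → ¬ rel ((σ j : ℕ) + 1) ((σ i : ℕ) + 1)) :
    IsLinExt n rel σ := by
  intro i j h
  rcases lt_trichotomy i j with hij | rfl | hji
  · exact hij
  · exact absurd h (hirr _)
  · exact absurd h (hσ j i hji)

theorem IsLinExt.coinv_subset_of_forall_coinv {n : ℕ} {rel : ℕ → ℕ → Prop}
    {μ τ : Equiv.Perm (Fin n)} (hμ : IsLinExt n rel μ)
    (hτ : ∀ i j, i < j → τ j < τ i → rel ((τ i : ℕ) + 1) ((τ j : ℕ) + 1)) :
    coinv n τ ⊆ coinv n μ := by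
  rintro _ ⟨i, j, hij, hlt, rfl⟩
  refine ⟨μ.symm (τ i), μ.symm (τ j), hμ _ _ ?_, by simpa using hlt, by simp⟩
  simpa using hτ i j hij hlt

theorem IsLinExt.coinv_subset_of_forall_ascent {n : ℕ} {rel : ℕ → ℕ → Prop}
    {μ σ : Equiv.Perm (Fin n)} (hμ : IsLinExt n rel μ)
    (hσ : ∀ i j, i < j → σ i < σ j → rel ((σ i : ℕ) + 1) ((σ j : ℕ) + 1)) :
    coinv n μ ⊆ coinv n σ := by
  rintro _ ⟨i, j, hij, hlt, rfl⟩
  refine ⟨σ.symm (μ i), σ.symm (μ j), ?_, by simpa using hlt, by simp⟩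
  rcases lt_trichotomy (σ.symm (μ i)) (σ.symm (μ j)) with h | h | h
  · exact h
  · exact absurd (μ.injective (σ.symm.injective h)) hij.ne
  · have := hμ j i (by simpa using hσ _ _ h (by simpa using hlt))
    exact absurd hij (lt_asymm this)

namespace BinTree

lemma inSub_node_root {l r : BinTree} {a : ℕ} :
    inSub (node l r) a (l.size + 1) ↔ 1 ≤ a ∧ a ≤ (node l r).size :=
  ⟨fun h => ⟨(inSub_bounds h).1, (inSub_bounds h).2.1⟩, fun h => Or.inl ⟨rfl, h⟩⟩

lemma inSub_node_of_le {l r : BinTree} {a b : ℕ} (hb : b ≤ l.size) :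
    inSub (node l r) a b ↔ inSub l a b := by
  refine ⟨?_, fun h => Or.inr (Or.inl h)⟩
  rintro (⟨rfl, -⟩ | h | ⟨-, h, -⟩)
  · omega
  · exact h
  · omega

lemma inSub_node_of_lt {l r : BinTree} {a b : ℕ} (hb : l.size + 1 < b) :
    inSub (node l r) a b ↔
      l.size + 1 < a ∧ inSub r (a - (l.size + 1)) (b - (l.size + 1)) := by
  refine ⟨?_, fun ⟨ha, h⟩ => Or.inr (Or.inr ⟨ha, hb, h⟩)⟩
  rintro (⟨rfl, -⟩ | h | ⟨ha, -, h⟩)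
  · omega
  · have := inSub_bounds h; omega
  · exact ⟨ha, h⟩

def postorder (rightFirst : Bool) : BinTree → List ℕ
  | leaf => []
  | node l r =>
    let L := postorder rightFirst l
    let R := (postorder rightFirst r).map (l.size + 1 + ·)
    (bif rightFirst then R ++ L else L ++ R) ++ [l.size + 1]

lemma postorder_perm (rightFirst : Bool) (T : BinTree) :
    (postorder rightFirst T).Perm (List.range' 1 T.size) := by
  induction T with
  | leaf => rfl
  | node l r ihl ihr =>
    have hR : ((postorder rightFirst r).map (l.size + 1 + ·)).Perm
        (List.range' (l.size + 2) r.size) := by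
      have := ihr.map (l.size + 1 + ·)
      rwa [List.map_add_range'] at this
    have hLR (L R : List ℕ) : (bif rightFirst then R ++ L else L ++ R).Perm (L ++ R) := by
      cases rightFirst
      · rfl
      · exact List.perm_append_comm
    have hrange : List.range' 1 (node l r).size =
        List.range' 1 l.size ++ (l.size + 1) :: List.range' (l.size + 2) r.size := by
      rw [size, add_assoc, ← List.range'_append, List.range'_succ, Nat.one_mul, Nat.add_comm 1]
    rw [hrange]
    exact (List.perm_append_singleton _ _).trans
      ((((hLR _ _).trans (ihl.append hR)).cons _).trans List.perm_middle.symm)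

lemma mem_postorder {rightFirst : Bool} {T : BinTree} {a : ℕ} :
    a ∈ postorder rightFirst T ↔ 1 ≤ a ∧ a ≤ T.size := by
  rw [(postorder_perm rightFirst T).mem_iff, List.mem_range'_1]
  omega

lemma not_bstRel_root {l r : BinTree} {a : ℕ} : ¬ bstRel (node l r) (l.size + 1) a := by
  rintro ⟨hne, h⟩
  rcases Nat.lt_or_ge l.size a with ha | ha
  · have := (inSub_node_of_lt (by omega)).1 h
    omega
  · have := inSub_bounds ((inSub_node_of_le ha).1 h)
    omega

lemma pairwise_postorder_not_bstRel (rightFirst : Bool) (T : BinTree) :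
    (postorder rightFirst T).Pairwise (fun a b => ¬ bstRel T b a) := by
  induction T with
  | leaf => exact List.Pairwise.nil
  | node l r ihl ihr =>
    have hL : (postorder rightFirst l).Pairwise (fun a b => ¬ bstRel (node l r) b a) :=
      ihl.imp_of_mem fun ha _ h h' =>
        h ⟨h'.1, (inSub_node_of_le (mem_postorder.1 ha).2).1 h'.2⟩
    have hR : ((postorder rightFirst r).map (l.size + 1 + ·)).Pairwise
        (fun a b => ¬ bstRel (node l r) b a) := by
      refine List.pairwise_map.2 (ihr.imp_of_mem fun ha _ h h' =>
        h ⟨fun hba => h'.1 (by rw [hba]), ?_⟩)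
      have := (inSub_node_of_lt (by have := mem_postorder.1 ha; omega)).1 h'.2
      simpa using this.2
    have hcross : ∀ a ∈ postorder rightFirst l,
        ∀ b ∈ (postorder rightFirst r).map (l.size + 1 + ·),
          ¬ bstRel (node l r) b a ∧ ¬ bstRel (node l r) a b := by
      simp only [List.mem_map, mem_postorder]
      rintro a ha _ ⟨b, hb, rfl⟩
      constructor
      · intro h
        have := inSub_bounds ((inSub_node_of_le ha.2).1 h.2)
        omega
      · intro h
        have := (inSub_node_of_lt (by omega)).1 h.2
        omega
    refine List.pairwise_append.2
      ⟨?_, List.pairwise_singleton _ _, fun a _ b hb => ?_⟩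
    · cases rightFirst
      · exact List.pairwise_append.2 ⟨hL, hR, fun a ha b hb => (hcross a ha b hb).1⟩
      · exact List.pairwise_append.2 ⟨hR, hL, fun a ha b hb => (hcross b hb a ha).2⟩
    · rw [List.mem_singleton.1 hb]
      exact not_bstRel_root

lemma bstRel.node_left {l r : BinTree} {a b : ℕ} (h : bstRel l a b) :
    bstRel (node l r) a b :=
  ⟨h.1, Or.inr (Or.inl h.2)⟩

lemma bstRel.node_right {l r : BinTree} {a b : ℕ} (h : bstRel r a b) :
    bstRel (node l r) (l.size + 1 + a) (l.size + 1 + b) := by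
  have := inSub_bounds h.2
  refine ⟨by have := h.1; omega, (inSub_node_of_lt (by omega)).2 ⟨by omega, ?_⟩⟩
  simpa using h.2

lemma bstRel_node_root {l r : BinTree} {a : ℕ} (ha : 1 ≤ a ∧ a ≤ (node l r).size)
    (hne : a ≠ l.size + 1) : bstRel (node l r) a (l.size + 1) :=
  ⟨hne, inSub_node_root.2 ha⟩

lemma pairwise_postorder_true_lt_imp_bstRel (T : BinTree) :
    (postorder true T).Pairwise (fun a b => a < b → bstRel T a b) := by
  induction T with
  | leaf => exact List.Pairwise.nil
  | node l r ihl ihr =>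
    refine List.pairwise_append.2 ⟨List.pairwise_append.2 ⟨?_, ?_, ?_⟩,
      List.pairwise_singleton _ _, fun a ha b hb hab => ?_⟩
    · exact List.pairwise_map.2 (ihr.imp fun h hab => (h (by omega)).node_right)
    · exact ihl.imp fun h hab => (h hab).node_left
    · simp only [List.mem_map, mem_postorder]
      rintro _ ⟨a, -, rfl⟩ b hb hab
      omega
    · rw [List.mem_singleton.1 hb] at hab ⊢
      exact bstRel_node_root (mem_postorder.1 (List.mem_append_left _ ha)) hab.ne

lemma pairwise_postorder_false_gt_imp_bstRel (T : BinTree) :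
    (postorder false T).Pairwise (fun a b => b < a → bstRel T a b) := by
  induction T with
  | leaf => exact List.Pairwise.nil
  | node l r ihl ihr =>
    refine List.pairwise_append.2 ⟨List.pairwise_append.2 ⟨?_, ?_, ?_⟩,
      List.pairwise_singleton _ _, fun a ha b hb hab => ?_⟩
    · exact ihl.imp fun h hab => (h hab).node_left
    · exact List.pairwise_map.2 (ihr.imp fun h hab => (h (by omega)).node_right)
    · simp only [List.mem_map, mem_postorder]
      rintro a ha _ ⟨b, -, rfl⟩ hab
      omega
    · rw [List.mem_singleton.1 hb] at hab ⊢
      exact bstRel_node_root (mem_postorder.1 (List.mem_append_left _ ha)) hab.ne'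

end BinTree

/-- For every binary tree `T` of size `n`: `ExtL(T) ⊆ ExtL(inc(T))` and some
`σ ∈ ExtL(T)` dominates every `μ ∈ ExtL(inc(T))` for co-inversions (the weak-order-maximal
linear extension of `inc(T)` is a linear extension of `T`); symmetrically,
`ExtL(T) ⊆ ExtL(dec(T))` and some `τ ∈ ExtL(T)` satisfies `coinv(τ) ⊆ coinv(μ)` for every
`μ ∈ ExtL(dec(T))`. -/
theorem extremal_linear_extensions (T : BinTree) :
    ((∀ σ : Equiv.Perm (Fin T.size),
        IsLinExt T.size (bstRel T) σ → IsLinExt T.size (incRel T) σ) ∧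
      ∃ σ : Equiv.Perm (Fin T.size), IsLinExt T.size (bstRel T) σ ∧
        ∀ μ : Equiv.Perm (Fin T.size), IsLinExt T.size (incRel T) μ →
          coinv T.size μ ⊆ coinv T.size σ) ∧
    ((∀ σ : Equiv.Perm (Fin T.size),
        IsLinExt T.size (bstRel T) σ → IsLinExt T.size (decRel T) σ) ∧
      ∃ τ : Equiv.Perm (Fin T.size), IsLinExt T.size (bstRel T) τ ∧
        ∀ μ : Equiv.Perm (Fin T.size), IsLinExt T.size (decRel T) μ →
          coinv T.size τ ⊆ coinv T.size μ) := by
  obtain ⟨σ, hσ⟩ := ((pairwise_postorder_not_bstRel true T).and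
    (pairwise_postorder_true_lt_imp_bstRel T)).exists_perm_of_perm_range'
      (postorder_perm true T)
  obtain ⟨τ, hτ⟩ := ((pairwise_postorder_not_bstRel false T).and
    (pairwise_postorder_false_gt_imp_bstRel T)).exists_perm_of_perm_range'
      (postorder_perm false T)
  have bst_irrefl (a : ℕ) : ¬ bstRel T a a := fun h => h.1 rfl
  refine ⟨⟨fun ρ hρ => hρ.mono fun _ _ h => h.2, σ, ?_, fun μ hμ => ?_⟩,
    ⟨fun ρ hρ => hρ.mono fun _ _ h => h.2, τ, ?_, fun μ hμ => ?_⟩⟩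
  · exact isLinExt_of_forall_lt_not_rel bst_irrefl fun i j hij => (hσ i j hij).1
  · refine hμ.coinv_subset_of_forall_ascent fun i j hij hlt => ?_
    exact ⟨Nat.add_lt_add_right hlt 1, (hσ i j hij).2 (Nat.add_lt_add_right hlt 1)⟩
  · exact isLinExt_of_forall_lt_not_rel bst_irrefl fun i j hij => (hτ i j hij).1
  · refine hμ.coinv_subset_of_forall_coinv fun i j hij hlt => ?_
    exact ⟨Nat.add_lt_add_right hlt 1, (hτ i j hij).2 (Nat.add_lt_add_right hlt 1)⟩
end
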